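/- arXiv:1609.03810 — 3 statements merged into one kernel-verified Lean document; each statement's English description precedes it below -/
import Mathlib

section
/- Variance formula for the synchronous-grid Hayashi–Yoshida-type estimator: let $(\hat I^i)_{1\le i\le \hat n}$ and $(J^j)_{1\le j\le m}$ be two partitions of $(0,T]$ such that each $J^j$ contains at most one $\hat I^i$ and each $\hat I^i$ meets at most intervals $J^j$ with $j$ in a contiguous block. Then $V_n=\sum_{i,j}\Delta M_1(\hat I^i)\Delta M_2(J^j)\mathbf{1}_{\{\hat I^i\cap J^j\ne\emptyset\}}$ satisfies $\mathrm{Var}(V_n)=\sum_{i,j}\nu_1(\hat I^i)\nu_2(J^j)\mathbf{1}_{\{\hat I^i\cap J^j\ne\emptyset\}} + \sum_i \nu^2(\hat I^i) + \sum_j \nu^2(J^j) - \sum_{i,j}\nu^2(\hat I^i\cap J^j)$. -/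
open MeasureTheory ProbabilityTheory Filter Real
open scoped NNReal ENNReal

lemma integrable_pow_mul_exp (b : ℝ) (hb : 0 < b) (n : ℕ) :
    Integrable (fun x : ℝ => x ^ n * Real.exp (-b * x ^ 2)) := by
  have := integrable_rpow_mul_exp_neg_mul_sq hb (s := (n : ℝ))
    (lt_of_lt_of_le neg_one_lt_zero (Nat.cast_nonneg n))
  simpa [Real.rpow_natCast] using this

lemma deriv_aux (b : ℝ) (n : ℕ) (x : ℝ) :
    HasDerivAt (fun y : ℝ => y ^ (n+1) * Real.exp (-b * y ^ 2))
      ((n+1) * x ^ n * Real.exp (-b * x ^ 2)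
        + x ^ (n+1) * (Real.exp (-b * x ^ 2) * (-b * (2 * x)))) x := by
  have h1 : HasDerivAt (fun y : ℝ => -b * y ^ 2) (-b * (2 * x)) x := by
    simpa using ((hasDerivAt_pow 2 x).const_mul (-b))
  have := (hasDerivAt_pow (n+1) x).mul h1.exp
  simpa [pow_succ, mul_comm, mul_assoc, mul_left_comm] using
    (show HasDerivAt (fun y : ℝ => y ^ (n+1) * Real.exp (-b * y ^ 2)) _ x from this)

lemma parts_aux (b : ℝ) (hb : 0 < b) (n : ℕ) :
    (2 * b) * ∫ x : ℝ, x ^ (n + 2) * Real.exp (-b * x ^ 2)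
      = (n + 1) * ∫ x : ℝ, x ^ n * Real.exp (-b * x ^ 2) := by
  have h2 := (integrable_pow_mul_exp b hb (n+2)).const_mul (-2 * b : ℝ)
  have h0 := (integrable_pow_mul_exp b hb n).const_mul ((n:ℝ)+1)
  have hf' : Integrable (fun x : ℝ =>
      ((n:ℝ)+1) * x ^ n * Real.exp (-b * x ^ 2)
        + x ^ (n+1) * (Real.exp (-b * x ^ 2) * (-b * (2 * x)))) := by
    exact (h0.add h2).congr (by
      filter_upwards with x
      simp only [Pi.add_apply]
      ring)
  have key := integral_eq_zero_of_hasDerivAt_of_integrable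
    (fun x => deriv_aux b n x) hf' (integrable_pow_mul_exp b hb (n+1))
  have hsplit : ∫ x : ℝ, (((n:ℝ)+1) * x ^ n * Real.exp (-b * x ^ 2)
        + x ^ (n+1) * (Real.exp (-b * x ^ 2) * (-b * (2 * x))))
      = ((n:ℝ)+1) * (∫ x : ℝ, x ^ n * Real.exp (-b * x ^ 2))
        + (-2*b) * ∫ x : ℝ, x ^ (n+2) * Real.exp (-b * x ^ 2) := by
    calc ∫ x : ℝ, (((n:ℝ)+1) * x ^ n * Real.exp (-b * x ^ 2)
        + x ^ (n+1) * (Real.exp (-b * x ^ 2) * (-b * (2 * x))))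
        = ∫ x : ℝ, (((n:ℝ)+1) * (x ^ n * Real.exp (-b * x ^ 2))
          + (-2*b) * (x ^ (n+2) * Real.exp (-b * x ^ 2))) := by
          congr 1; funext x; ring
      _ = _ := by
          rw [integral_add h0 h2, integral_const_mul, integral_const_mul]
  rw [key] at hsplit
  linarith [hsplit]

lemma integral_sq_exp (b : ℝ) (hb : 0 < b) :
    ∫ x : ℝ, x ^ 2 * Real.exp (-b * x ^ 2) = Real.sqrt (π / b) / (2 * b) := by
  have h := parts_aux b hb 0
  simp only [pow_zero, one_mul, Nat.cast_zero, zero_add] at h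
  rw [integral_gaussian] at h
  have hb' : (2:ℝ) * b ≠ 0 := by positivity
  rw [eq_div_iff hb']
  linarith

lemma integral_pow4_exp (b : ℝ) (hb : 0 < b) :
    ∫ x : ℝ, x ^ 4 * Real.exp (-b * x ^ 2) = 3 * Real.sqrt (π / b) / (4 * b ^ 2) := by
  have h := parts_aux b hb 2
  rw [integral_sq_exp b hb] at h
  have hb' : (2:ℝ) * b ≠ 0 := by positivity
  have hb2 : (4:ℝ) * b ^ 2 ≠ 0 := by positivity
  rw [eq_div_iff hb2]
  norm_num at h
  have h4 := congrArg (fun z => 2 * b * z) h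
  rw [show 2*b*(3*(Real.sqrt (π/b)/(2*b))) = 3*Real.sqrt (π/b) by field_simp] at h4
  simp only [neg_mul] at h4 ⊢
  linear_combination h4

lemma integrable_dirac' {f : ℝ → ℝ} (hf : Measurable f) (a : ℝ) :
    Integrable f (Measure.dirac a) := by
  refine ⟨hf.aestronglyMeasurable, ?_⟩
  rw [HasFiniteIntegral, lintegral_dirac]
  exact ENNReal.coe_lt_top


lemma gaussian_moment_aux (v : ℝ≥0) (hv : v ≠ 0) (n : ℕ) :
    Integrable (fun x : ℝ => x ^ n) (gaussianReal 0 v) ∧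
    ∫ x, x ^ n ∂(gaussianReal 0 v)
      = (Real.sqrt (2 * π * v))⁻¹ * ∫ x : ℝ, x ^ n * Real.exp (-(2 * (v:ℝ))⁻¹ * x ^ 2) := by
  have hv' : (0:ℝ) < v := by positivity
  set b : ℝ := (2 * (v:ℝ))⁻¹ with hbdef
  have hb : 0 < b := by positivity
  have hpt : ∀ x : ℝ, gaussianPDFReal 0 v x * x ^ n
      = (Real.sqrt (2 * π * v))⁻¹ * (x ^ n * Real.exp (-b * x ^ 2)) := by
    intro x
    rw [gaussianPDFReal]
    have harg : -(x - 0) ^ 2 / (2 * (v:ℝ)) = -b * x ^ 2 := by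
      rw [hbdef]; field_simp; ring
    rw [harg]; ring
  have hmeas : Measurable fun x => (gaussianPDFReal 0 v x).toNNReal :=
    (measurable_gaussianPDFReal 0 v).real_toNNReal
  have hmeq : gaussianReal 0 v
      = volume.withDensity (fun x => ((gaussianPDFReal 0 v x).toNNReal : ℝ≥0∞)) := by
    rw [gaussianReal_of_var_ne_zero 0 hv]; rfl
  have hsmul : ∀ x : ℝ, (gaussianPDFReal 0 v x).toNNReal • (x ^ n)
      = (Real.sqrt (2 * π * v))⁻¹ * (x ^ n * Real.exp (-b * x ^ 2)) := by
    intro x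
    rw [NNReal.smul_def, Real.coe_toNNReal _ (gaussianPDFReal_nonneg 0 v x)]
    exact hpt x
  constructor
  · rw [hmeq, integrable_withDensity_iff_integrable_smul hmeas]
    exact (((integrable_pow_mul_exp b hb n).const_mul _).congr
      (by filter_upwards with x; exact (hsmul x).symm))
  · rw [hmeq, integral_withDensity_eq_integral_smul hmeas]
    rw [show (fun x : ℝ => (gaussianPDFReal 0 v x).toNNReal • (x ^ n))
        = fun x : ℝ => (Real.sqrt (2 * π * v))⁻¹ * (x ^ n * Real.exp (-b * x ^ 2))
      from funext hsmul]
    rw [integral_const_mul]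

lemma gaussian_sq_moment (v : ℝ≥0) :
    Integrable (fun x : ℝ => x ^ 2) (gaussianReal 0 v) ∧
    ∫ x, x ^ 2 ∂(gaussianReal 0 v) = v := by
  by_cases hv : v = 0
  · subst hv
    rw [gaussianReal_zero_var]
    constructor
    · exact _root_.integrable_dirac' (by measurability) _
    · rw [integral_dirac]; norm_num
  · obtain ⟨h1, h2⟩ := gaussian_moment_aux v hv 2
    refine ⟨h1, ?_⟩
    rw [h2]
    have hv' : (0:ℝ) < v := by positivity
    have hb : (0:ℝ) < (2 * (v:ℝ))⁻¹ := by positivity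
    rw [integral_sq_exp _ hb]
    have hπ : π / ((2 * (v:ℝ))⁻¹) = 2 * π * v := by field_simp
    rw [hπ]
    have hs : Real.sqrt (2 * π * (v:ℝ)) ≠ 0 := by positivity
    field_simp

lemma gaussian_pow4_moment (v : ℝ≥0) :
    Integrable (fun x : ℝ => x ^ 4) (gaussianReal 0 v) ∧
    ∫ x, x ^ 4 ∂(gaussianReal 0 v) = 3 * (v:ℝ) ^ 2 := by
  by_cases hv : v = 0
  · subst hv
    rw [gaussianReal_zero_var]
    constructor
    · exact _root_.integrable_dirac' (by measurability) _
    · rw [integral_dirac]; norm_num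
  · obtain ⟨h1, h2⟩ := gaussian_moment_aux v hv 4
    refine ⟨h1, ?_⟩
    rw [h2]
    have hv' : (0:ℝ) < v := by positivity
    have hb : (0:ℝ) < (2 * (v:ℝ))⁻¹ := by positivity
    rw [integral_pow4_exp _ hb]
    have hπ : π / ((2 * (v:ℝ))⁻¹) = 2 * π * v := by field_simp
    rw [hπ]
    have hs : Real.sqrt (2 * π * (v:ℝ)) ≠ 0 := by positivity
    have h4 : (4 : ℝ) * ((2 * (v:ℝ))⁻¹) ^ 2 = ((v:ℝ)^2)⁻¹ := by
      field_simp; ring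
    rw [h4]
    field_simp

lemma map_moments {Ω : Type*} [MeasurableSpace Ω] {μ : Measure Ω} {S : Ω → ℝ}
    (hS : Measurable S) (hg : ∃ v : ℝ≥0, Measure.map S μ = gaussianReal 0 v) :
    Integrable (fun ω => S ω ^ 2) μ ∧ Integrable (fun ω => S ω ^ 4) μ ∧
      ∫ ω, S ω ^ 4 ∂μ = 3 * (∫ ω, S ω ^ 2 ∂μ) ^ 2 := by
  obtain ⟨v, hv⟩ := hg
  have h2 := gaussian_sq_moment v
  have h4 := gaussian_pow4_moment v
  have hS' : AEMeasurable S μ := hS.aemeasurable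
  have i2 : Integrable (fun ω => S ω ^ 2) μ := by
    have := (integrable_map_measure (by fun_prop) hS').mp (hv ▸ h2.1)
    exact this
  have i4 : Integrable (fun ω => S ω ^ 4) μ := by
    have := (integrable_map_measure (by fun_prop) hS').mp (hv ▸ h4.1)
    exact this
  have e2 : ∫ ω, S ω ^ 2 ∂μ = (v:ℝ) := by
    have h := integral_map (φ := S) hS' (f := fun x : ℝ => x ^ 2)
      (measurable_id.pow_const 2).aestronglyMeasurable
    rw [← h, hv, h2.2]
  have e4 : ∫ ω, S ω ^ 4 ∂μ = 3 * (v:ℝ) ^ 2 := by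
    have h := integral_map (φ := S) hS' (f := fun x : ℝ => x ^ 4)
      (measurable_id.pow_const 4).aestronglyMeasurable
    rw [← h, hv, h4.2]
  exact ⟨i2, i4, by rw [e2, e4]⟩

lemma isserlis {Ω : Type*} [MeasurableSpace Ω] (μ : Measure Ω) [IsProbabilityMeasure μ]
    (X Y Z W : Ω → ℝ)
    (hmX : Measurable X) (hmY : Measurable Y) (hmZ : Measurable Z) (hmW : Measurable W)
    (hG : ∀ a b c d : ℝ, ∃ v : ℝ≥0,
      Measure.map (fun ω => a * X ω + b * Y ω + c * Z ω + d * W ω) μ = gaussianReal 0 v) :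
    Integrable (fun ω => X ω * Y ω * Z ω * W ω) μ ∧
    ∫ ω, X ω * Y ω * Z ω * W ω ∂μ
      = (∫ ω, X ω * Y ω ∂μ) * (∫ ω, Z ω * W ω ∂μ)
      + (∫ ω, X ω * Z ω ∂μ) * (∫ ω, Y ω * W ω ∂μ)
      + (∫ ω, X ω * W ω ∂μ) * (∫ ω, Y ω * Z ω ∂μ) := by
  have hm : ∀ a b c d : ℝ, Measurable (fun ω => a * X ω + b * Y ω + c * Z ω + d * W ω) := by
    intro a b c d; fun_prop
  have base : ∀ a b c d : ℝ,
      Integrable (fun ω => (a * X ω + b * Y ω + c * Z ω + d * W ω) ^ 2) μ ∧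
      Integrable (fun ω => (a * X ω + b * Y ω + c * Z ω + d * W ω) ^ 4) μ ∧
      ∫ ω, (a * X ω + b * Y ω + c * Z ω + d * W ω) ^ 4 ∂μ
        = 3 * (∫ ω, (a * X ω + b * Y ω + c * Z ω + d * W ω) ^ 2 ∂μ) ^ 2 :=
    fun a b c d => map_moments (hm a b c d) (hG a b c d)
  -- pairwise product integrability
  have pairInt : ∀ a b c d a' b' c' d' : ℝ,
      Integrable (fun ω =>
        (a * X ω + b * Y ω + c * Z ω + d * W ω)
          * (a' * X ω + b' * Y ω + c' * Z ω + d' * W ω)) μ := by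
    intro a b c d a' b' c' d'
    have h1 := (base (a+a') (b+b') (c+c') (d+d')).1
    have h2 := (base a b c d).1
    have h3 := (base a' b' c' d').1
    have h4 := ((h1.sub h2).sub h3).const_mul (1/2 : ℝ)
    refine h4.congr ?_
    filter_upwards with ω
    simp only [Pi.sub_apply]
    ring
  have intXY : Integrable (fun ω => X ω * Y ω) μ := by
    have := pairInt 1 0 0 0 0 1 0 0
    refine this.congr ?_; filter_upwards with ω; ring
  have intXZ : Integrable (fun ω => X ω * Z ω) μ := by
    have := pairInt 1 0 0 0 0 0 1 0
    refine this.congr ?_; filter_upwards with ω; ring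
  have intXW : Integrable (fun ω => X ω * W ω) μ := by
    have := pairInt 1 0 0 0 0 0 0 1
    refine this.congr ?_; filter_upwards with ω; ring
  have intYZ : Integrable (fun ω => Y ω * Z ω) μ := by
    have := pairInt 0 1 0 0 0 0 1 0
    refine this.congr ?_; filter_upwards with ω; ring
  have intYW : Integrable (fun ω => Y ω * W ω) μ := by
    have := pairInt 0 1 0 0 0 0 0 1
    refine this.congr ?_; filter_upwards with ω; ring
  have intZW : Integrable (fun ω => Z ω * W ω) μ := by
    have := pairInt 0 0 1 0 0 0 0 1
    refine this.congr ?_; filter_upwards with ω; ring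
  have intXX : Integrable (fun ω => X ω * X ω) μ := by
    have := pairInt 1 0 0 0 1 0 0 0
    refine this.congr ?_; filter_upwards with ω; ring
  have intYY : Integrable (fun ω => Y ω * Y ω) μ := by
    have := pairInt 0 1 0 0 0 1 0 0
    refine this.congr ?_; filter_upwards with ω; ring
  have intZZ : Integrable (fun ω => Z ω * Z ω) μ := by
    have := pairInt 0 0 1 0 0 0 1 0
    refine this.congr ?_; filter_upwards with ω; ring
  have intWW : Integrable (fun ω => W ω * W ω) μ := by
    have := pairInt 0 0 0 1 0 0 0 1
    refine this.congr ?_; filter_upwards with ω; ring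
  -- second-moment expansion
  have E2 : ∀ a b c d : ℝ, ∫ ω, (a * X ω + b * Y ω + c * Z ω + d * W ω) ^ 2 ∂μ
      = a^2 * (∫ ω, X ω * X ω ∂μ) + b^2 * (∫ ω, Y ω * Y ω ∂μ)
      + c^2 * (∫ ω, Z ω * Z ω ∂μ) + d^2 * (∫ ω, W ω * W ω ∂μ)
      + 2*(a*b) * (∫ ω, X ω * Y ω ∂μ) + 2*(a*c) * (∫ ω, X ω * Z ω ∂μ)
      + 2*(a*d) * (∫ ω, X ω * W ω ∂μ) + 2*(b*c) * (∫ ω, Y ω * Z ω ∂μ)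
      + 2*(b*d) * (∫ ω, Y ω * W ω ∂μ) + 2*(c*d) * (∫ ω, Z ω * W ω ∂μ) := by
    intro a b c d
    have t9 : Integrable (fun ω => 2*(c*d) * (Z ω * W ω)) μ := intZW.const_mul _
    have t8 : Integrable (fun ω => 2*(b*d) * (Y ω * W ω) + 2*(c*d) * (Z ω * W ω)) μ :=
      (intYW.const_mul _).add t9
    have t7 : Integrable (fun ω => 2*(b*c) * (Y ω * Z ω) + (2*(b*d) * (Y ω * W ω)
        + 2*(c*d) * (Z ω * W ω))) μ := (intYZ.const_mul _).add t8
    have t6 : Integrable (fun ω => 2*(a*d) * (X ω * W ω) + (2*(b*c) * (Y ω * Z ω)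
        + (2*(b*d) * (Y ω * W ω) + 2*(c*d) * (Z ω * W ω)))) μ := (intXW.const_mul _).add t7
    have t5 : Integrable (fun ω => 2*(a*c) * (X ω * Z ω) + (2*(a*d) * (X ω * W ω)
        + (2*(b*c) * (Y ω * Z ω) + (2*(b*d) * (Y ω * W ω)
        + 2*(c*d) * (Z ω * W ω))))) μ := (intXZ.const_mul _).add t6
    have t4 : Integrable (fun ω => 2*(a*b) * (X ω * Y ω) + (2*(a*c) * (X ω * Z ω)
        + (2*(a*d) * (X ω * W ω) + (2*(b*c) * (Y ω * Z ω) + (2*(b*d) * (Y ω * W ω)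
        + 2*(c*d) * (Z ω * W ω)))))) μ := (intXY.const_mul _).add t5
    have t3 : Integrable (fun ω => d^2 * (W ω * W ω) + (2*(a*b) * (X ω * Y ω)
        + (2*(a*c) * (X ω * Z ω) + (2*(a*d) * (X ω * W ω) + (2*(b*c) * (Y ω * Z ω)
        + (2*(b*d) * (Y ω * W ω) + 2*(c*d) * (Z ω * W ω))))))) μ := (intWW.const_mul _).add t4
    have t2 : Integrable (fun ω => c^2 * (Z ω * Z ω) + (d^2 * (W ω * W ω)
        + (2*(a*b) * (X ω * Y ω) + (2*(a*c) * (X ω * Z ω) + (2*(a*d) * (X ω * W ω)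
        + (2*(b*c) * (Y ω * Z ω) + (2*(b*d) * (Y ω * W ω)
        + 2*(c*d) * (Z ω * W ω)))))))) μ := (intZZ.const_mul _).add t3
    have t1 : Integrable (fun ω => b^2 * (Y ω * Y ω) + (c^2 * (Z ω * Z ω) + (d^2 * (W ω * W ω)
        + (2*(a*b) * (X ω * Y ω) + (2*(a*c) * (X ω * Z ω) + (2*(a*d) * (X ω * W ω)
        + (2*(b*c) * (Y ω * Z ω) + (2*(b*d) * (Y ω * W ω)
        + 2*(c*d) * (Z ω * W ω))))))))) μ := (intYY.const_mul _).add t2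
    calc ∫ ω, (a * X ω + b * Y ω + c * Z ω + d * W ω) ^ 2 ∂μ
        = ∫ ω, (a^2 * (X ω * X ω) + (b^2 * (Y ω * Y ω) + (c^2 * (Z ω * Z ω)
          + (d^2 * (W ω * W ω) + (2*(a*b) * (X ω * Y ω) + (2*(a*c) * (X ω * Z ω)
          + (2*(a*d) * (X ω * W ω) + (2*(b*c) * (Y ω * Z ω) + (2*(b*d) * (Y ω * W ω)
          + 2*(c*d) * (Z ω * W ω)))))))))) ∂μ := by congr 1; funext ω; ring
      _ = _ := by
          rw [integral_add (intXX.const_mul _) t1, integral_add (intYY.const_mul _) t2,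
            integral_add (intZZ.const_mul _) t3, integral_add (intWW.const_mul _) t4,
            integral_add (intXY.const_mul _) t5, integral_add (intXZ.const_mul _) t6,
            integral_add (intXW.const_mul _) t7, integral_add (intYZ.const_mul _) t8,
            integral_add (intYW.const_mul _) t9]
          simp only [integral_const_mul]
          ring
  -- the eight fourth moments
  have key : ∀ p q r : ℝ, ∫ ω, (1 * X ω + p * Y ω + q * Z ω + r * W ω) ^ 4 ∂μ
      = 3 * ((1:ℝ)^2 * (∫ ω, X ω * X ω ∂μ) + p^2 * (∫ ω, Y ω * Y ω ∂μ)
      + q^2 * (∫ ω, Z ω * Z ω ∂μ) + r^2 * (∫ ω, W ω * W ω ∂μ)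
      + 2*(1*p) * (∫ ω, X ω * Y ω ∂μ) + 2*(1*q) * (∫ ω, X ω * Z ω ∂μ)
      + 2*(1*r) * (∫ ω, X ω * W ω ∂μ) + 2*(p*q) * (∫ ω, Y ω * Z ω ∂μ)
      + 2*(p*r) * (∫ ω, Y ω * W ω ∂μ) + 2*(q*r) * (∫ ω, Z ω * W ω ∂μ)) ^ 2 := by
    intro p q r
    rw [(base 1 p q r).2.2, E2 1 p q r]
  -- polarization
  have hpt : (fun ω => X ω * Y ω * Z ω * W ω) = fun ω => (1/192 : ℝ) *
      ((1 * X ω + 1 * Y ω + 1 * Z ω + 1 * W ω)^4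
      - (1 * X ω + 1 * Y ω + 1 * Z ω + (-1) * W ω)^4
      - (1 * X ω + 1 * Y ω + (-1) * Z ω + 1 * W ω)^4
      + (1 * X ω + 1 * Y ω + (-1) * Z ω + (-1) * W ω)^4
      - (1 * X ω + (-1) * Y ω + 1 * Z ω + 1 * W ω)^4
      + (1 * X ω + (-1) * Y ω + 1 * Z ω + (-1) * W ω)^4
      + (1 * X ω + (-1) * Y ω + (-1) * Z ω + 1 * W ω)^4
      - (1 * X ω + (-1) * Y ω + (-1) * Z ω + (-1) * W ω)^4) := by
    funext ω; ring
  have i1 := (base 1 1 1 1).2.1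
  have i2 := (base 1 1 1 (-1)).2.1
  have i3 := (base 1 1 (-1) 1).2.1
  have i4 := (base 1 1 (-1) (-1)).2.1
  have i5 := (base 1 (-1) 1 1).2.1
  have i6 := (base 1 (-1) 1 (-1)).2.1
  have i7 := (base 1 (-1) (-1) 1).2.1
  have i8 := (base 1 (-1) (-1) (-1)).2.1
  have j2 : Integrable (fun ω => (1 * X ω + 1 * Y ω + 1 * Z ω + 1 * W ω)^4
      - (1 * X ω + 1 * Y ω + 1 * Z ω + (-1) * W ω)^4) μ := i1.sub i2
  have j3 : Integrable (fun ω => (1 * X ω + 1 * Y ω + 1 * Z ω + 1 * W ω)^4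
      - (1 * X ω + 1 * Y ω + 1 * Z ω + (-1) * W ω)^4
      - (1 * X ω + 1 * Y ω + (-1) * Z ω + 1 * W ω)^4) μ := j2.sub i3
  have j4 : Integrable (fun ω => (1 * X ω + 1 * Y ω + 1 * Z ω + 1 * W ω)^4
      - (1 * X ω + 1 * Y ω + 1 * Z ω + (-1) * W ω)^4
      - (1 * X ω + 1 * Y ω + (-1) * Z ω + 1 * W ω)^4
      + (1 * X ω + 1 * Y ω + (-1) * Z ω + (-1) * W ω)^4) μ := j3.add i4
  have j5 : Integrable (fun ω => (1 * X ω + 1 * Y ω + 1 * Z ω + 1 * W ω)^4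
      - (1 * X ω + 1 * Y ω + 1 * Z ω + (-1) * W ω)^4
      - (1 * X ω + 1 * Y ω + (-1) * Z ω + 1 * W ω)^4
      + (1 * X ω + 1 * Y ω + (-1) * Z ω + (-1) * W ω)^4
      - (1 * X ω + (-1) * Y ω + 1 * Z ω + 1 * W ω)^4) μ := j4.sub i5
  have j6 : Integrable (fun ω => (1 * X ω + 1 * Y ω + 1 * Z ω + 1 * W ω)^4
      - (1 * X ω + 1 * Y ω + 1 * Z ω + (-1) * W ω)^4
      - (1 * X ω + 1 * Y ω + (-1) * Z ω + 1 * W ω)^4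
      + (1 * X ω + 1 * Y ω + (-1) * Z ω + (-1) * W ω)^4
      - (1 * X ω + (-1) * Y ω + 1 * Z ω + 1 * W ω)^4
      + (1 * X ω + (-1) * Y ω + 1 * Z ω + (-1) * W ω)^4) μ := j5.add i6
  have j7 : Integrable (fun ω => (1 * X ω + 1 * Y ω + 1 * Z ω + 1 * W ω)^4
      - (1 * X ω + 1 * Y ω + 1 * Z ω + (-1) * W ω)^4
      - (1 * X ω + 1 * Y ω + (-1) * Z ω + 1 * W ω)^4
      + (1 * X ω + 1 * Y ω + (-1) * Z ω + (-1) * W ω)^4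
      - (1 * X ω + (-1) * Y ω + 1 * Z ω + 1 * W ω)^4
      + (1 * X ω + (-1) * Y ω + 1 * Z ω + (-1) * W ω)^4
      + (1 * X ω + (-1) * Y ω + (-1) * Z ω + 1 * W ω)^4) μ := j6.add i7
  have j8 : Integrable (fun ω => (1 * X ω + 1 * Y ω + 1 * Z ω + 1 * W ω)^4
      - (1 * X ω + 1 * Y ω + 1 * Z ω + (-1) * W ω)^4
      - (1 * X ω + 1 * Y ω + (-1) * Z ω + 1 * W ω)^4
      + (1 * X ω + 1 * Y ω + (-1) * Z ω + (-1) * W ω)^4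
      - (1 * X ω + (-1) * Y ω + 1 * Z ω + 1 * W ω)^4
      + (1 * X ω + (-1) * Y ω + 1 * Z ω + (-1) * W ω)^4
      + (1 * X ω + (-1) * Y ω + (-1) * Z ω + 1 * W ω)^4
      - (1 * X ω + (-1) * Y ω + (-1) * Z ω + (-1) * W ω)^4) μ := j7.sub i8
  have hIntP : Integrable (fun ω => X ω * Y ω * Z ω * W ω) μ := by
    rw [hpt]
    exact j8.const_mul (1/192 : ℝ)
  refine ⟨hIntP, ?_⟩
  have hval : ∫ ω, X ω * Y ω * Z ω * W ω ∂μ = (1/192 : ℝ) *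
      ((∫ ω, (1 * X ω + 1 * Y ω + 1 * Z ω + 1 * W ω)^4 ∂μ)
      - (∫ ω, (1 * X ω + 1 * Y ω + 1 * Z ω + (-1) * W ω)^4 ∂μ)
      - (∫ ω, (1 * X ω + 1 * Y ω + (-1) * Z ω + 1 * W ω)^4 ∂μ)
      + (∫ ω, (1 * X ω + 1 * Y ω + (-1) * Z ω + (-1) * W ω)^4 ∂μ)
      - (∫ ω, (1 * X ω + (-1) * Y ω + 1 * Z ω + 1 * W ω)^4 ∂μ)
      + (∫ ω, (1 * X ω + (-1) * Y ω + 1 * Z ω + (-1) * W ω)^4 ∂μ)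
      + (∫ ω, (1 * X ω + (-1) * Y ω + (-1) * Z ω + 1 * W ω)^4 ∂μ)
      - (∫ ω, (1 * X ω + (-1) * Y ω + (-1) * Z ω + (-1) * W ω)^4 ∂μ)) := by
    rw [hpt, integral_const_mul]
    congr 1
    rw [integral_sub j7 i8, integral_add j6 i7, integral_add j5 i6, integral_sub j4 i5,
      integral_add j3 i4, integral_sub j2 i3, integral_sub i1 i2]
  rw [hval, key 1 1 1, key 1 1 (-1), key 1 (-1) 1, key 1 (-1) (-1),
    key (-1) 1 1, key (-1) 1 (-1), key (-1) (-1) 1, key (-1) (-1) (-1)]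
  ring

lemma mono_of_strict (t : ℕ → ℝ) (n : ℕ) (h : ∀ i < n, t i < t (i + 1)) :
    ∀ a b, a ≤ b → b ≤ n → t a ≤ t b := by
  intro a b hab hbn
  induction b, hab using Nat.le_induction with
  | base => exact le_rfl
  | succ b hb ih =>
    exact le_trans (ih (by omega)) (h b (by omega)).le

lemma comb_identity (I K : Finset ℕ) (ν : ℕ → ℕ → ℝ) :
    ∑ i ∈ I, ∑ j ∈ K, ∑ k ∈ I, ∑ l ∈ K, (if i = k ∨ j = l then ν i l * ν k j else 0)
      = ∑ i ∈ I, (∑ j ∈ K, ν i j) ^ 2 + ∑ j ∈ K, (∑ i ∈ I, ν i j) ^ 2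
        - ∑ i ∈ I, ∑ j ∈ K, (ν i j) ^ 2 := by
  have split : ∀ (i j k l : ℕ), (if i = k ∨ j = l then ν i l * ν k j else 0)
      = (if i = k then ν i l * ν k j else 0) + (if j = l then ν i l * ν k j else 0)
        - (if i = k ∧ j = l then ν i l * ν k j else 0) := by
    intro i j k l
    by_cases h1 : i = k <;> by_cases h2 : j = l <;> simp [h1, h2]
  simp only [split]
  rw [show (∑ i ∈ I, ∑ j ∈ K, ∑ k ∈ I, ∑ l ∈ K,
      ((if i = k then ν i l * ν k j else 0) + (if j = l then ν i l * ν k j else 0)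
        - (if i = k ∧ j = l then ν i l * ν k j else 0)))
    = (∑ i ∈ I, ∑ j ∈ K, ∑ k ∈ I, ∑ l ∈ K, (if i = k then ν i l * ν k j else 0))
      + (∑ i ∈ I, ∑ j ∈ K, ∑ k ∈ I, ∑ l ∈ K, (if j = l then ν i l * ν k j else 0))
      - (∑ i ∈ I, ∑ j ∈ K, ∑ k ∈ I, ∑ l ∈ K, (if i = k ∧ j = l then ν i l * ν k j else 0))
    by simp only [← Finset.sum_sub_distrib, ← Finset.sum_add_distrib]]
  congr 1
  · congr 1
    · -- i = k term
      apply Finset.sum_congr rfl; intro i hi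
      calc ∑ j ∈ K, ∑ k ∈ I, ∑ l ∈ K, (if i = k then ν i l * ν k j else 0)
          = ∑ j ∈ K, (∑ l ∈ K, ν i l) * ν i j := by
            apply Finset.sum_congr rfl; intro j _
            rw [Finset.sum_comm]
            calc ∑ l ∈ K, ∑ k ∈ I, (if i = k then ν i l * ν k j else 0)
                = ∑ l ∈ K, ν i l * ν i j := by
                  apply Finset.sum_congr rfl; intro l _
                  rw [Finset.sum_ite_eq I i (fun k => ν i l * ν k j), if_pos hi]
              _ = (∑ l ∈ K, ν i l) * ν i j := by rw [Finset.sum_mul]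
        _ = (∑ l ∈ K, ν i l) * ∑ j ∈ K, ν i j := by rw [← Finset.mul_sum]
        _ = (∑ j ∈ K, ν i j) ^ 2 := by rw [sq]
    · -- j = l term
      rw [Finset.sum_comm]
      apply Finset.sum_congr rfl; intro j hj
      calc ∑ i ∈ I, ∑ k ∈ I, ∑ l ∈ K, (if j = l then ν i l * ν k j else 0)
          = ∑ i ∈ I, ∑ k ∈ I, ν i j * ν k j := by
            apply Finset.sum_congr rfl; intro i _
            apply Finset.sum_congr rfl; intro k _
            rw [Finset.sum_ite_eq K j (fun l => ν i l * ν k j), if_pos hj]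
        _ = (∑ i ∈ I, ν i j) ^ 2 := by
            rw [sq, Finset.sum_mul_sum]
  · -- diagonal term
    apply Finset.sum_congr rfl; intro i hi
    apply Finset.sum_congr rfl; intro j hj
    have hk : ∀ k, ∑ l ∈ K, (if i = k ∧ j = l then ν i l * ν k j else 0)
        = if i = k then ν i j * ν k j else 0 := by
      intro k
      by_cases hik : i = k
      · simp only [hik, eq_self_iff_true, true_and, if_true]
        rw [Finset.sum_ite_eq K j (fun l => ν k l * ν k j), if_pos hj]
      · simp [hik]
    simp only [hk]
    rw [Finset.sum_ite_eq I i (fun k => ν i j * ν k j), if_pos hi, sq]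

lemma Ioc_biUnion_partition (s : ℕ → ℝ) (m : ℕ)
    (hs : ∀ a b, a ≤ b → b ≤ m → s a ≤ s b) :
    ∀ k, k ≤ m → ⋃ j ∈ Finset.Icc 1 k, Set.Ioc (s (j-1)) (s j) = Set.Ioc (s 0) (s k) := by
  intro k
  induction k with
  | zero => intro _; simp
  | succ k ih =>
    intro hk
    have hins : Finset.Icc 1 (k+1) = insert (k+1) (Finset.Icc 1 k) := by
      ext x; simp only [Finset.mem_Icc, Finset.mem_insert]; omega
    rw [hins, Finset.set_biUnion_insert, ih (by omega), Nat.add_sub_cancel,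
      Set.union_comm, Set.Ioc_union_Ioc_eq_Ioc (hs 0 k (by omega) (by omega))
        (hs k (k+1) (by omega) hk)]

lemma integral_Ioc_partition (g : ℝ → ℝ) (s : ℕ → ℝ) (m : ℕ)
    (hs : ∀ a b, a ≤ b → b ≤ m → s a ≤ s b)
    (A : Set ℝ) (hA : MeasurableSet A) (hsub : A ⊆ Set.Ioc (s 0) (s m))
    (hg : IntegrableOn g (Set.Ioc (s 0) (s m))) :
    ∫ u in A, g u = ∑ j ∈ Finset.Icc 1 m, ∫ u in A ∩ Set.Ioc (s (j-1)) (s j), g u := by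
  have hU : A = ⋃ j ∈ Finset.Icc 1 m, (A ∩ Set.Ioc (s (j-1)) (s j)) := by
    rw [← Set.inter_iUnion₂]
    rw [show (⋃ j ∈ Finset.Icc 1 m, Set.Ioc (s (j-1)) (s j)) = Set.Ioc (s 0) (s m) from
      Ioc_biUnion_partition s m hs m le_rfl]
    exact (Set.inter_eq_self_of_subset_left hsub).symm
  conv_lhs => rw [hU]
  apply integral_biUnion_finset
  · exact fun j _ => hA.inter measurableSet_Ioc
  · intro a ha b hb hab
    simp only [Finset.coe_Icc, Set.mem_Icc] at ha hb
    refine Set.disjoint_of_subset Set.inter_subset_right Set.inter_subset_right ?_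
    rw [Set.Ioc_disjoint_Ioc]
    rcases hab.lt_or_gt with h | h
    · exact le_trans (min_le_left _ _) (le_trans (hs a (b-1) (by omega) (by omega))
        (le_max_right _ _))
    · exact le_trans (min_le_right _ _) (le_trans (hs b (a-1) (by omega) (by omega))
        (le_max_left _ _))
  · exact fun j _ => hg.mono_set (Set.Subset.trans Set.inter_subset_left hsub)

lemma Ioc_inter_eq_empty (t : ℕ → ℝ) (n : ℕ)
    (ht : ∀ a b, a ≤ b → b ≤ n → t a ≤ t b)
    (i k : ℕ) (hi1 : 1 ≤ i) (hi2 : i ≤ n) (hk1 : 1 ≤ k) (hk2 : k ≤ n) (hik : i ≠ k) :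
    Set.Ioc (t (i-1)) (t i) ∩ Set.Ioc (t (k-1)) (t k) = ∅ := by
  rw [Set.Ioc_inter_Ioc, Set.Ioc_eq_empty]
  rw [not_lt]
  rcases hik.lt_or_gt with h | h
  · exact le_trans (inf_le_left) (le_trans (ht i (k-1) (by omega) (by omega)) le_sup_right)
  · exact le_trans (inf_le_right) (le_trans (ht k (i-1) (by omega) (by omega)) le_sup_left)

lemma geom_contra (t s : ℕ → ℝ) (nhat m : ℕ)
    (ht : ∀ a b, a ≤ b → b ≤ nhat → t a ≤ t b) (hs : ∀ a b, a ≤ b → b ≤ m → s a ≤ s b)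
    (i k j l : ℕ) (hi1 : 1 ≤ i) (hi2 : i ≤ nhat) (hk1 : 1 ≤ k) (hk2 : k ≤ nhat)
    (hj1 : 1 ≤ j) (hj2 : j ≤ m) (hl1 : 1 ≤ l) (hl2 : l ≤ m) (hik : i ≠ k) (hjl : j ≠ l)
    (h1 : (Set.Ioc (t (i-1)) (t i) ∩ Set.Ioc (s (j-1)) (s j)).Nonempty)
    (h2 : (Set.Ioc (t (k-1)) (t k) ∩ Set.Ioc (s (l-1)) (s l)).Nonempty)
    (h3 : (Set.Ioc (t (i-1)) (t i) ∩ Set.Ioc (s (l-1)) (s l)).Nonempty)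
    (h4 : (Set.Ioc (t (k-1)) (t k) ∩ Set.Ioc (s (j-1)) (s j)).Nonempty) : False := by
  simp only [Set.Ioc_inter_Ioc, Set.nonempty_Ioc, sup_lt_iff, lt_inf_iff] at h1 h2 h3 h4
  obtain ⟨⟨_, h1b⟩, h1c, _⟩ := h1
  obtain ⟨⟨_, h2b⟩, h2c, _⟩ := h2
  obtain ⟨⟨_, h3b⟩, h3c, _⟩ := h3
  obtain ⟨⟨_, h4b⟩, h4c, _⟩ := h4
  rcases hjl.lt_or_gt with hjl' | hjl'
  · have h5 : s j ≤ s (l-1) := hs j (l-1) (by omega) (by omega)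
    rcases hik.lt_or_gt with h | h
    · have : t i ≤ t (k-1) := ht i (k-1) (by omega) (by omega)
      linarith
    · have : t k ≤ t (i-1) := ht k (i-1) (by omega) (by omega)
      linarith
  · have h5 : s l ≤ s (j-1) := hs l (j-1) (by omega) (by omega)
    rcases hik.lt_or_gt with h | h
    · have : t i ≤ t (k-1) := ht i (k-1) (by omega) (by omega)
      linarith
    · have : t k ≤ t (i-1) := ht k (i-1) (by omega) (by omega)
      linarith

lemma pair_integrable {Ω : Type*} [MeasurableSpace Ω] (μ : Measure Ω) [IsProbabilityMeasure μ]
    (X Y : Ω → ℝ) (hmX : Measurable X) (hmY : Measurable Y)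
    (hG : ∀ a b : ℝ, ∃ v : ℝ≥0,
      Measure.map (fun ω => a * X ω + b * Y ω) μ = gaussianReal 0 v) :
    Integrable (fun ω => X ω * Y ω) μ := by
  have base : ∀ a b : ℝ, Integrable (fun ω => (a * X ω + b * Y ω) ^ 2) μ :=
    fun a b => (map_moments (by fun_prop) (hG a b)).1
  have h := (((base 1 1).sub (base 1 0)).sub (base 0 1)).const_mul (1/2 : ℝ)
  refine h.congr ?_
  filter_upwards with ω
  simp only [Pi.sub_apply]
  ring

/-- Abstract family of Wiener integrals `ΔM ℓ A = ∫_A σ_ℓ dW_ℓ` of deterministic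
functions against two correlated Brownian motions with deterministic correlation `ρ`. -/
structure IsCorrWienerFamily {Ω : Type*} [MeasurableSpace Ω] (μ : Measure Ω)
    (σ₁ σ₂ ρ : ℝ → ℝ) (ΔM : Fin 2 → Set ℝ → Ω → ℝ) : Prop where
  meas : ∀ ℓ A, Measurable (ΔM ℓ A)
  centered : ∀ ℓ A, Integrable (ΔM ℓ A) μ ∧ ∫ ω, ΔM ℓ A ω ∂μ = 0
  jointGaussian : ∀ (k : ℕ) (ℓ : Fin k → Fin 2) (A : Fin k → Set ℝ) (a : Fin k → ℝ),
    ∃ v : NNReal,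
      Measure.map (fun ω => ∑ i, a i * ΔM (ℓ i) (A i) ω) μ = gaussianReal 0 v
  cov₁₂ : ∀ A B : Set ℝ, MeasurableSet A → MeasurableSet B →
    ∫ ω, ΔM 0 A ω * ΔM 1 B ω ∂μ = ∫ t in A ∩ B, σ₁ t * σ₂ t * ρ t
  cov₁₁ : ∀ A B : Set ℝ, MeasurableSet A → MeasurableSet B →
    ∫ ω, ΔM 0 A ω * ΔM 0 B ω ∂μ = ∫ t in A ∩ B, (σ₁ t) ^ 2
  cov₂₂ : ∀ A B : Set ℝ, MeasurableSet A → MeasurableSet B →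
    ∫ ω, ΔM 1 A ω * ΔM 1 B ω ∂μ = ∫ t in A ∩ B, (σ₂ t) ^ 2
  additive : ∀ ℓ (A B : Set ℝ), MeasurableSet A → MeasurableSet B → Disjoint A B →
    ∀ᵐ ω ∂μ, ΔM ℓ (A ∪ B) ω = ΔM ℓ A ω + ΔM ℓ B ω

open scoped Classical in
/-- variance formula for the Hayashi–Yoshida-type estimator built on
the reduced design `(Î^i)` and the partition `(J^j)` of `(0,T]`:
`Var(V_n) = ∑_{i,j} ν₁(Î^i)ν₂(J^j) 1_{Î^i∩J^j≠∅} + ∑_i ν(Î^i)² + ∑_j ν(J^j)²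
  - ∑_{i,j} ν(Î^i∩J^j)²`. -/
theorem hayashi_yoshida_variance_formula
    {Ω : Type*} [MeasurableSpace Ω] (μ : Measure Ω) [IsProbabilityMeasure μ]
    (σ₁ σ₂ ρ : ℝ → ℝ) (T : ℝ) (hT : 0 < T)
    (hσ₁ : Measurable σ₁) (hσ₂ : Measurable σ₂) (hρmeas : Measurable ρ)
    (hσ₁L2 : IntegrableOn (fun t => σ₁ t ^ 2) (Set.Icc 0 T))
    (hσ₂L2 : IntegrableOn (fun t => σ₂ t ^ 2) (Set.Icc 0 T))
    (hρ : ∀ t, ρ t ∈ Set.Icc (0 : ℝ) 1)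
    (ΔM : Fin 2 → Set ℝ → Ω → ℝ)
    (hW : IsCorrWienerFamily μ σ₁ σ₂ ρ ΔM)
    (nhat m : ℕ) (t s : ℕ → ℝ)
    (ht0 : t 0 = 0) (htT : t nhat = T) (hs0 : s 0 = 0) (hsT : s m = T)
    (htmono : ∀ i < nhat, t i < t (i + 1)) (hsmono : ∀ j < m, s j < s (j + 1))
    (Ihat J : ℕ → Set ℝ)
    (hIhat : ∀ i, Ihat i = Set.Ioc (t (i - 1)) (t i))
    (hJ : ∀ j, J j = Set.Ioc (s (j - 1)) (s j))
    -- each J^j contains at most one Î^i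
    (hone : ∀ j ∈ Finset.Icc 1 m, ∀ i₁ ∈ Finset.Icc 1 nhat, ∀ i₂ ∈ Finset.Icc 1 nhat,
      Ihat i₁ ⊆ J j → Ihat i₂ ⊆ J j → i₁ = i₂)
    -- each Î^i meets a contiguous block of the J^j's
    (hcontig : ∀ i ∈ Finset.Icc 1 nhat, ∀ j₁ j₂ j : ℕ, j₁ ≤ j → j ≤ j₂ →
      (Ihat i ∩ J j₁).Nonempty → (Ihat i ∩ J j₂).Nonempty → (Ihat i ∩ J j).Nonempty) :
    variance (fun ω => ∑ i ∈ Finset.Icc 1 nhat, ∑ j ∈ Finset.Icc 1 m,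
        if (Ihat i ∩ J j).Nonempty then ΔM 0 (Ihat i) ω * ΔM 1 (J j) ω else 0) μ =
      (∑ i ∈ Finset.Icc 1 nhat, ∑ j ∈ Finset.Icc 1 m,
        if (Ihat i ∩ J j).Nonempty then
          (∫ u in Ihat i, (σ₁ u) ^ 2) * (∫ u in J j, (σ₂ u) ^ 2) else 0) +
      (∑ i ∈ Finset.Icc 1 nhat, (∫ u in Ihat i, σ₁ u * σ₂ u * ρ u) ^ 2) +
      (∑ j ∈ Finset.Icc 1 m, (∫ u in J j, σ₁ u * σ₂ u * ρ u) ^ 2) -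
      (∑ i ∈ Finset.Icc 1 nhat, ∑ j ∈ Finset.Icc 1 m,
        (∫ u in Ihat i ∩ J j, σ₁ u * σ₂ u * ρ u) ^ 2) := by
  classical
  -- basic abbreviations
  set I : Finset ℕ := Finset.Icc 1 nhat with hI_def
  set K : Finset ℕ := Finset.Icc 1 m with hK_def
  set X : ℕ → Ω → ℝ := fun i => ΔM 0 (Ihat i) with hX_def
  set Y : ℕ → Ω → ℝ := fun j => ΔM 1 (J j) with hY_def
  set ν : ℕ → ℕ → ℝ := fun i j => ∫ u in Ihat i ∩ J j, σ₁ u * σ₂ u * ρ u with hν_def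
  have htm := mono_of_strict t nhat htmono
  have hsm := mono_of_strict s m hsmono
  have hmX : ∀ i, Measurable (X i) := fun i => hW.meas 0 (Ihat i)
  have hmY : ∀ j, Measurable (Y j) := fun j => hW.meas 1 (J j)
  have hMI : ∀ i, MeasurableSet (Ihat i) := fun i => by
    rw [hIhat i]; exact measurableSet_Ioc
  have hMJ : ∀ j, MeasurableSet (J j) := fun j => by
    rw [hJ j]; exact measurableSet_Ioc
  -- joint gaussianity of quadruples
  have hG4 : ∀ i j k l, ∀ aa bb cc dd : ℝ, ∃ v : ℝ≥0,
      Measure.map (fun ω => aa * X i ω + bb * Y j ω + cc * X k ω + dd * Y l ω) μ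
        = gaussianReal 0 v := by
    intro i j k l aa bb cc dd
    obtain ⟨v, hv⟩ := hW.jointGaussian 4 ![0,1,0,1] ![Ihat i, J j, Ihat k, J l] ![aa,bb,cc,dd]
    refine ⟨v, ?_⟩
    have e : (fun ω => ∑ x : Fin 4, (![aa,bb,cc,dd]) x
          * ΔM ((![0,1,0,1]) x) ((![Ihat i, J j, Ihat k, J l]) x) ω)
        = (fun ω => aa * X i ω + bb * Y j ω + cc * X k ω + dd * Y l ω) := by
      funext ω
      simp [Fin.sum_univ_four, hX_def, hY_def]
    rw [← e]; exact hv
  have hG2 : ∀ i j, ∀ aa bb : ℝ, ∃ v : ℝ≥0,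
      Measure.map (fun ω => aa * X i ω + bb * Y j ω) μ = gaussianReal 0 v := by
    intro i j aa bb
    obtain ⟨v, hv⟩ := hW.jointGaussian 2 ![0,1] ![Ihat i, J j] ![aa,bb]
    refine ⟨v, ?_⟩
    have e : (fun ω => ∑ x : Fin 2, (![aa,bb]) x
          * ΔM ((![0,1]) x) ((![Ihat i, J j]) x) ω)
        = (fun ω => aa * X i ω + bb * Y j ω) := by
      funext ω
      simp [Fin.sum_univ_two, hX_def, hY_def]
    rw [← e]; exact hv
  have hIss := fun i j k l => isserlis μ (X i) (Y j) (X k) (Y l)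
    (hmX i) (hmY j) (hmX k) (hmY l) (hG4 i j k l)
  have hIntXY : ∀ i j, Integrable (fun ω => X i ω * Y j ω) μ :=
    fun i j => pair_integrable μ (X i) (Y j) (hmX i) (hmY j) (hG2 i j)
  -- covariances
  have hcov12 : ∀ i j, ∫ ω, X i ω * Y j ω ∂μ = ν i j :=
    fun i j => hW.cov₁₂ (Ihat i) (J j) (hMI i) (hMJ j)
  have hcov21 : ∀ j k, ∫ ω, Y j ω * X k ω ∂μ = ν k j := by
    intro j k
    calc ∫ ω, Y j ω * X k ω ∂μ = ∫ ω, X k ω * Y j ω ∂μ := by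
          congr 1; funext ω; ring
      _ = ν k j := hcov12 k j
  have hcov11 : ∀ i k, ∫ ω, X i ω * X k ω ∂μ = ∫ u in Ihat i ∩ Ihat k, σ₁ u ^ 2 :=
    fun i k => hW.cov₁₁ (Ihat i) (Ihat k) (hMI i) (hMI k)
  have hcov22 : ∀ j l, ∫ ω, Y j ω * Y l ω ∂μ = ∫ u in J j ∩ J l, σ₂ u ^ 2 :=
    fun j l => hW.cov₂₂ (J j) (J l) (hMJ j) (hMJ l)
  -- fourth moment formula
  have E4 : ∀ i j k l, ∫ ω, X i ω * Y j ω * X k ω * Y l ω ∂μ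
      = ν i j * ν k l + (∫ u in Ihat i ∩ Ihat k, σ₁ u ^ 2) * (∫ u in J j ∩ J l, σ₂ u ^ 2)
        + ν i l * ν k j := by
    intro i j k l
    rw [(hIss i j k l).2, hcov12, hcov12, hcov11, hcov22, hcov12, hcov21]
  -- summand family indexed by pairs
  set F : ℕ × ℕ → Ω → ℝ :=
    fun p ω => if (Ihat p.1 ∩ J p.2).Nonempty then X p.1 ω * Y p.2 ω else 0 with hF_def
  have hFmeas : ∀ p, Measurable (F p) := by
    intro p
    by_cases hp : (Ihat p.1 ∩ J p.2).Nonempty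
    · simp only [hF_def, if_pos hp]; exact (hmX p.1).mul (hmY p.2)
    · simp only [hF_def, if_neg hp]; exact measurable_const
  have hFInt : ∀ p, Integrable (F p) μ := by
    intro p
    by_cases hp : (Ihat p.1 ∩ J p.2).Nonempty
    · simp only [hF_def, if_pos hp]; exact hIntXY p.1 p.2
    · simp only [hF_def, if_neg hp]; exact integrable_zero _ _ _
  have hFFInt : ∀ p q, Integrable (fun ω => F p ω * F q ω) μ := by
    intro p q
    by_cases hp : (Ihat p.1 ∩ J p.2).Nonempty
    · by_cases hq : (Ihat q.1 ∩ J q.2).Nonempty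
      · simp only [hF_def, if_pos hp, if_pos hq]
        exact ((hIss p.1 p.2 q.1 q.2).1).congr (by
          filter_upwards with ω; ring)
      · simp only [hF_def, if_neg hq, mul_zero]; exact integrable_zero _ _ _
    · simp only [hF_def, if_neg hp, zero_mul]; exact integrable_zero _ _ _
  have hIF : ∀ p, ∫ ω, F p ω ∂μ
      = if (Ihat p.1 ∩ J p.2).Nonempty then ν p.1 p.2 else 0 := by
    intro p
    by_cases hp : (Ihat p.1 ∩ J p.2).Nonempty
    · simp only [hF_def, if_pos hp]; exact hcov12 p.1 p.2
    · simp only [hF_def, if_neg hp]; exact integral_zero _ _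
  have hIFF : ∀ p q, ∫ ω, F p ω * F q ω ∂μ
      = if (Ihat p.1 ∩ J p.2).Nonempty ∧ (Ihat q.1 ∩ J q.2).Nonempty then
          ν p.1 p.2 * ν q.1 q.2
          + (∫ u in Ihat p.1 ∩ Ihat q.1, σ₁ u ^ 2) * (∫ u in J p.2 ∩ J q.2, σ₂ u ^ 2)
          + ν p.1 q.2 * ν q.1 p.2
        else 0 := by
    intro p q
    by_cases hp : (Ihat p.1 ∩ J p.2).Nonempty
    · by_cases hq : (Ihat q.1 ∩ J q.2).Nonempty
      · rw [if_pos ⟨hp, hq⟩]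
        calc ∫ ω, F p ω * F q ω ∂μ
            = ∫ ω, X p.1 ω * Y p.2 ω * X q.1 ω * Y q.2 ω ∂μ := by
              congr 1; funext ω; simp only [hF_def, if_pos hp, if_pos hq]; ring
          _ = _ := E4 p.1 p.2 q.1 q.2
      · rw [if_neg (by tauto)]
        calc ∫ ω, F p ω * F q ω ∂μ = ∫ ω, (0:ℝ) ∂μ := by
              congr 1; funext ω; simp only [hF_def, if_neg hq, mul_zero]
          _ = 0 := integral_zero _ _
    · rw [if_neg (by tauto)]
      calc ∫ ω, F p ω * F q ω ∂μ = ∫ ω, (0:ℝ) ∂μ := by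
            congr 1; funext ω; simp only [hF_def, if_neg hp, zero_mul]
        _ = 0 := integral_zero _ _
  -- the estimator as a sum over the product finset
  set V : Ω → ℝ := fun ω => ∑ i ∈ I, ∑ j ∈ K,
      if (Ihat i ∩ J j).Nonempty then X i ω * Y j ω else 0 with hV_def
  have hVF : V = fun ω => ∑ p ∈ I ×ˢ K, F p ω := by
    funext ω
    rw [Finset.sum_product]
  have hVmeas : Measurable V := by
    rw [hVF]; exact Finset.measurable_sum _ (fun p _ => hFmeas p)
  have hVsq : (fun ω => V ω ^ 2)
      = fun ω => ∑ p ∈ I ×ˢ K, ∑ q ∈ I ×ˢ K, F p ω * F q ω := by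
    funext ω
    rw [hVF, sq, Finset.sum_mul_sum]
  have hVsqInt : Integrable (fun ω => V ω ^ 2) μ := by
    rw [hVsq]
    exact integrable_finset_sum _ (fun p _ =>
      integrable_finset_sum _ (fun q _ => hFFInt p q))
  have hMem : MemLp V 2 μ :=
    (memLp_two_iff_integrable_sq hVmeas.aestronglyMeasurable).2 hVsqInt
  -- variance formula
  have hvar : variance V μ = (∫ ω, V ω ^ 2 ∂μ) - (∫ ω, V ω ∂μ) ^ 2 := by
    rw [variance_eq_sub hMem]
    rfl
  -- first moment
  have hEV : ∫ ω, V ω ∂μ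
      = ∑ p ∈ I ×ˢ K, (if (Ihat p.1 ∩ J p.2).Nonempty then ν p.1 p.2 else 0) := by
    rw [hVF, integral_finset_sum _ (fun p _ => hFInt p)]
    exact Finset.sum_congr rfl fun p _ => hIF p
  -- second moment
  have hEV2 : ∫ ω, V ω ^ 2 ∂μ
      = ∑ p ∈ I ×ˢ K, ∑ q ∈ I ×ˢ K,
          (if (Ihat p.1 ∩ J p.2).Nonempty ∧ (Ihat q.1 ∩ J q.2).Nonempty then
            ν p.1 p.2 * ν q.1 q.2
            + (∫ u in Ihat p.1 ∩ Ihat q.1, σ₁ u ^ 2) * (∫ u in J p.2 ∩ J q.2, σ₂ u ^ 2)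
            + ν p.1 q.2 * ν q.1 p.2
          else 0) := by
    rw [hVsq, integral_finset_sum _ (fun p _ =>
      integrable_finset_sum _ (fun q _ => hFFInt p q))]
    refine Finset.sum_congr rfl fun p _ => ?_
    rw [integral_finset_sum _ (fun q _ => hFFInt p q)]
    exact Finset.sum_congr rfl fun q _ => hIFF p q
  -- square of the first moment
  have hEVsq : (∫ ω, V ω ∂μ) ^ 2
      = ∑ p ∈ I ×ˢ K, ∑ q ∈ I ×ˢ K,
          (if (Ihat p.1 ∩ J p.2).Nonempty ∧ (Ihat q.1 ∩ J q.2).Nonempty then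
            ν p.1 p.2 * ν q.1 q.2 else 0) := by
    rw [hEV, sq, Finset.sum_mul_sum]
    refine Finset.sum_congr rfl fun p _ => Finset.sum_congr rfl fun q _ => ?_
    by_cases hp : (Ihat p.1 ∩ J p.2).Nonempty <;>
      by_cases hq : (Ihat q.1 ∩ J q.2).Nonempty <;>
      simp [hp, hq]
  -- the variance as two terms
  have hvar2 : variance V μ
      = (∑ p ∈ I ×ˢ K, ∑ q ∈ I ×ˢ K,
          (if (Ihat p.1 ∩ J p.2).Nonempty ∧ (Ihat q.1 ∩ J q.2).Nonempty then
            (∫ u in Ihat p.1 ∩ Ihat q.1, σ₁ u ^ 2) * (∫ u in J p.2 ∩ J q.2, σ₂ u ^ 2)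
          else 0))
        + (∑ p ∈ I ×ˢ K, ∑ q ∈ I ×ˢ K,
          (if (Ihat p.1 ∩ J p.2).Nonempty ∧ (Ihat q.1 ∩ J q.2).Nonempty then
            ν p.1 q.2 * ν q.1 p.2 else 0)) := by
    rw [hvar, hEV2, hEVsq]
    rw [← Finset.sum_sub_distrib, ← Finset.sum_add_distrib]
    refine Finset.sum_congr rfl fun p _ => ?_
    rw [← Finset.sum_sub_distrib, ← Finset.sum_add_distrib]
    refine Finset.sum_congr rfl fun q _ => ?_
    by_cases hpq : (Ihat p.1 ∩ J p.2).Nonempty ∧ (Ihat q.1 ∩ J q.2).Nonempty <;>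
      simp [hpq] <;> ring
  -- Term A reduces to the diagonal
  have hI1zero : ∀ i k, i ∈ I → k ∈ I → i ≠ k →
      (∫ u in Ihat i ∩ Ihat k, σ₁ u ^ 2) = 0 := by
    intro i k hi hk hik
    rw [hI_def, Finset.mem_Icc] at hi hk
    rw [hIhat i, hIhat k,
      Ioc_inter_eq_empty t nhat htm i k hi.1 hi.2 hk.1 hk.2 hik]
    simp
  have hJ2zero : ∀ j l, j ∈ K → l ∈ K → j ≠ l →
      (∫ u in J j ∩ J l, σ₂ u ^ 2) = 0 := by
    intro j l hj hl hjl
    rw [hK_def, Finset.mem_Icc] at hj hl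
    rw [hJ j, hJ l,
      Ioc_inter_eq_empty s m hsm j l hj.1 hj.2 hl.1 hl.2 hjl]
    simp
  have hTermA : (∑ p ∈ I ×ˢ K, ∑ q ∈ I ×ˢ K,
        (if (Ihat p.1 ∩ J p.2).Nonempty ∧ (Ihat q.1 ∩ J q.2).Nonempty then
          (∫ u in Ihat p.1 ∩ Ihat q.1, σ₁ u ^ 2) * (∫ u in J p.2 ∩ J q.2, σ₂ u ^ 2)
        else 0))
      = ∑ i ∈ I, ∑ j ∈ K, (if (Ihat i ∩ J j).Nonempty then
          (∫ u in Ihat i, σ₁ u ^ 2) * (∫ u in J j, σ₂ u ^ 2) else 0) := by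
    rw [Finset.sum_product]
    refine Finset.sum_congr rfl fun i hi => Finset.sum_congr rfl fun j hj => ?_
    rw [Finset.sum_eq_single_of_mem ((i, j) : ℕ × ℕ)
      (Finset.mem_product.2 ⟨hi, hj⟩) ?side]
    · by_cases hp : (Ihat i ∩ J j).Nonempty
      · rw [if_pos ⟨hp, hp⟩, if_pos hp, Set.inter_self, Set.inter_self]
      · rw [if_neg (by tauto), if_neg hp]
    case side =>
      intro q hq hne
      rcases Finset.mem_product.1 hq with ⟨hq1, hq2⟩
      by_cases h1 : i = q.1
      · have h2 : j ≠ q.2 := by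
          intro h2; exact hne (Prod.ext h1.symm h2.symm)
        rw [hJ2zero j q.2 hj hq2 h2, mul_zero]
        simp
      · rw [hI1zero i q.1 hi hq1 h1, zero_mul]
        simp
  -- Term B: geometric reduction
  have hgeo : ∀ p q : ℕ × ℕ, p ∈ I ×ˢ K → q ∈ I ×ˢ K →
      (if (Ihat p.1 ∩ J p.2).Nonempty ∧ (Ihat q.1 ∩ J q.2).Nonempty then
        ν p.1 q.2 * ν q.1 p.2 else 0)
      = (if p.1 = q.1 ∨ p.2 = q.2 then ν p.1 q.2 * ν q.1 p.2 else 0) := by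
    intro p q hp hq
    rcases Finset.mem_product.1 hp with ⟨hp1, hp2⟩
    rcases Finset.mem_product.1 hq with ⟨hq1, hq2⟩
    rw [hI_def, Finset.mem_Icc] at hp1 hq1
    rw [hK_def, Finset.mem_Icc] at hp2 hq2
    by_cases hz : ν p.1 q.2 * ν q.1 p.2 = 0
    · rw [hz]; simp
    · have hz1 : ν p.1 q.2 ≠ 0 := left_ne_zero_of_mul hz
      have hz2 : ν q.1 p.2 ≠ 0 := right_ne_zero_of_mul hz
      have hne1 : (Ihat p.1 ∩ J q.2).Nonempty := by
        rw [Set.nonempty_iff_ne_empty]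
        intro h
        apply hz1
        simp only [hν_def, h]
        simp
      have hne2 : (Ihat q.1 ∩ J p.2).Nonempty := by
        rw [Set.nonempty_iff_ne_empty]
        intro h
        apply hz2
        simp only [hν_def, h]
        simp
      by_cases hor : p.1 = q.1 ∨ p.2 = q.2
      · rw [if_pos hor, if_pos]
        refine ⟨?_, ?_⟩ <;> rcases hor with h | h
        · rw [h]; exact hne2
        · rw [h]; exact hne1
        · rw [← h]; exact hne1
        · rw [← h]; exact hne2
      · push_neg at hor
        have hcontra : ¬((Ihat p.1 ∩ J p.2).Nonempty ∧ (Ihat q.1 ∩ J q.2).Nonempty) := by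
          rintro ⟨hPp, hPq⟩
          have hPp' := hPp
          have hPq' := hPq
          have hne1' := hne1
          have hne2' := hne2
          simp only [hIhat, hJ] at hPp' hPq' hne1' hne2'
          exact geom_contra t s nhat m htm hsm p.1 q.1 p.2 q.2
            hp1.1 hp1.2 hq1.1 hq1.2 hp2.1 hp2.2 hq2.1 hq2.2 hor.1 hor.2
            hPp' hPq' hne1' hne2'
        rw [if_neg hcontra, if_neg (not_or.2 ⟨hor.1, hor.2⟩)]
  have hTermB : (∑ p ∈ I ×ˢ K, ∑ q ∈ I ×ˢ K,
        (if (Ihat p.1 ∩ J p.2).Nonempty ∧ (Ihat q.1 ∩ J q.2).Nonempty then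
          ν p.1 q.2 * ν q.1 p.2 else 0))
      = ∑ i ∈ I, (∑ j ∈ K, ν i j) ^ 2 + ∑ j ∈ K, (∑ i ∈ I, ν i j) ^ 2
        - ∑ i ∈ I, ∑ j ∈ K, (ν i j) ^ 2 := by
    rw [Finset.sum_congr rfl (fun p hp => Finset.sum_congr rfl (fun q hq => hgeo p q hp hq))]
    rw [show (∑ p ∈ I ×ˢ K, ∑ q ∈ I ×ˢ K,
        (if p.1 = q.1 ∨ p.2 = q.2 then ν p.1 q.2 * ν q.1 p.2 else 0))
      = ∑ i ∈ I, ∑ j ∈ K, ∑ k ∈ I, ∑ l ∈ K,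
        (if i = k ∨ j = l then ν i l * ν k j else 0) by
        simp only [Finset.sum_product]]
    exact comb_identity I K ν
  -- integrability of σ₁σ₂ρ
  have hgint : IntegrableOn (fun u => σ₁ u * σ₂ u * ρ u) (Set.Icc 0 T) := by
    have hb : IntegrableOn (fun u => (σ₁ u ^ 2 + σ₂ u ^ 2) / 2) (Set.Icc 0 T) :=
      (hσ₁L2.add hσ₂L2).div_const 2
    refine Integrable.mono hb
      ((hσ₁.mul hσ₂ |>.mul hρmeas).aestronglyMeasurable) ?_
    refine Filter.Eventually.of_forall fun x => ?_
    rw [Real.norm_eq_abs, Real.norm_eq_abs, abs_mul, abs_mul,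
      abs_of_nonneg (by positivity : (0:ℝ) ≤ (σ₁ x ^ 2 + σ₂ x ^ 2) / 2)]
    have hρx := hρ x
    rw [Set.mem_Icc] at hρx
    have h1 : |ρ x| ≤ 1 := abs_le.2 ⟨by linarith [hρx.1], hρx.2⟩
    nlinarith [abs_nonneg (σ₁ x), abs_nonneg (σ₂ x), sq_abs (σ₁ x), sq_abs (σ₂ x),
      sq_nonneg (|σ₁ x| - |σ₂ x|), mul_nonneg (abs_nonneg (σ₁ x)) (abs_nonneg (σ₂ x))]
  have hgS : IntegrableOn (fun u => σ₁ u * σ₂ u * ρ u) (Set.Ioc (s 0) (s m)) := by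
    rw [hs0, hsT]; exact hgint.mono_set Set.Ioc_subset_Icc_self
  have hgT : IntegrableOn (fun u => σ₁ u * σ₂ u * ρ u) (Set.Ioc (t 0) (t nhat)) := by
    rw [ht0, htT]; exact hgint.mono_set Set.Ioc_subset_Icc_self
  -- partition sums
  have hrowsum : ∀ i ∈ I, (∫ u in Ihat i, σ₁ u * σ₂ u * ρ u) = ∑ j ∈ K, ν i j := by
    intro i hi
    rw [hI_def, Finset.mem_Icc] at hi
    have hsub : Ihat i ⊆ Set.Ioc (s 0) (s m) := by
      rw [hIhat i, hs0, hsT]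
      have h0 : (0:ℝ) ≤ t (i-1) := by
        rw [← ht0]; exact htm 0 (i-1) (Nat.zero_le _) (by omega)
      have hTT : t i ≤ T := by rw [← htT]; exact htm i nhat hi.2 le_rfl
      exact Set.Ioc_subset_Ioc h0 hTT
    rw [integral_Ioc_partition (fun u => σ₁ u * σ₂ u * ρ u) s m hsm (Ihat i)
      (hMI i) hsub hgS]
    refine Finset.sum_congr (by rw [hK_def]) fun j _ => ?_
    simp only [hν_def]
    rw [hJ j]
  have hcolsum : ∀ j ∈ K, (∫ u in J j, σ₁ u * σ₂ u * ρ u) = ∑ i ∈ I, ν i j := by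
    intro j hj
    rw [hK_def, Finset.mem_Icc] at hj
    have hsub : J j ⊆ Set.Ioc (t 0) (t nhat) := by
      rw [hJ j, ht0, htT]
      have h0 : (0:ℝ) ≤ s (j-1) := by
        rw [← hs0]; exact hsm 0 (j-1) (Nat.zero_le _) (by omega)
      have hTT : s j ≤ T := by rw [← hsT]; exact hsm j m hj.2 le_rfl
      rw [← ht0, ← htT] at *
      exact Set.Ioc_subset_Ioc (by rw [ht0]; exact h0) (by rw [htT]; exact hTT)
    rw [integral_Ioc_partition (fun u => σ₁ u * σ₂ u * ρ u) t nhat htm (J j)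
      (hMJ j) hsub hgT]
    refine Finset.sum_congr (by rw [hI_def]) fun i _ => ?_
    simp only [hν_def]
    rw [hIhat i, Set.inter_comm]
  -- final assembly
  rw [hvar2, hTermA, hTermB]
  have e2 : ∑ i ∈ I, (∑ j ∈ K, ν i j) ^ 2
      = ∑ i ∈ I, (∫ u in Ihat i, σ₁ u * σ₂ u * ρ u) ^ 2 :=
    Finset.sum_congr rfl fun i hi => by rw [hrowsum i hi]
  have e3 : ∑ j ∈ K, (∑ i ∈ I, ν i j) ^ 2
      = ∑ j ∈ K, (∫ u in J j, σ₁ u * σ₂ u * ρ u) ^ 2 :=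
    Finset.sum_congr rfl fun j hj => by rw [hcolsum j hj]
  rw [e2, e3]
  simp only [hν_def]
  ring
end

section
/- Combinatorial bound on reduced design size: with stopping indices $\tau_k,\varsigma_k$ defined by $\tau_k=\inf\{\tau_{k-1}<i\le n: I^i\not\subseteq J^{\varsigma_{k-1}}\}$, $\varsigma_k=\sup\{\varsigma_{k-1}<j\le m: I^{\tau_k}\cap J^j\ne\emptyset\}$ and $n_0=\sup\{k:\tau_k<\infty\}$, the number $\hat n$ of intervals in the reduced partition satisfies $n_0\le \hat n\le n_0 + \sum_{k=1}^{n_0}\mathbf{1}_{\{\tau_k-\tau_{k-1}>1\}} + \mathbf{1}_{\{\tau_{n_0}<n\}} \le 2n_0+1$. -/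
open Filter Set


lemma aux_sInf_image (A : Set ℕ) (ha : A.Nonempty) :
    sInf ((fun i : ℕ => (i:ℕ∞)) '' A) = ((sInf A : ℕ) : ℕ∞) := by
  apply le_antisymm
  · exact sInf_le ⟨sInf A, Nat.sInf_mem ha, rfl⟩
  · refine le_sInf ?_
    rintro x ⟨a, haA, rfl⟩
    simp only []
    exact_mod_cast Nat.sInf_le haA


open scoped Classical in
/-- combinatorial bound on the size of the reduced design.  With the
stopping indices `τ_k = inf{τ_{k-1} < i ≤ n : I^i ⊄ J^{ς_{k-1}}}` (in `ℕ∞`, with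
`inf ∅ = ⊤`), `ς_k = sup{ς_{k-1} < j ≤ m : I^{τ_k} ∩ J^j ≠ ∅}` (with `sup ∅ = 0`),
`τ_0 = 0`, `ς_0 = 1`, and `n₀ = sup{k : τ_k < ∞}`, the number `n̂` of intervals of the
reduced partition (obtained by merging adjacent `I^i`'s lying in a common `J^j`)
satisfies `n₀ ≤ n̂ ≤ n₀ + ∑_{k=1}^{n₀} 1_{τ_k - τ_{k-1} > 1} + 1_{τ_{n₀} < n} ≤ 2n₀ + 1`. -/
theorem reduced_design_size_bound
    (T : ℝ) (hT : 0 < T) (n m : ℕ) (hn : 1 ≤ n) (hm : 1 ≤ m)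
    (t s : ℕ → ℝ)
    (ht0 : t 0 = 0) (htT : t n = T) (hs0 : s 0 = 0) (hsT : s m = T)
    (htmono : ∀ i < n, t i < t (i + 1)) (hsmono : ∀ j < m, s j < s (j + 1))
    (I J : ℕ → Set ℝ)
    (hI : ∀ i, I i = Set.Ioc (t (i - 1)) (t i))
    (hJ : ∀ j, J j = Set.Ioc (s (j - 1)) (s j))
    (τ : ℕ → ℕ∞) (ς : ℕ → ℕ)
    (hτ0 : τ 0 = 0) (hς0 : ς 0 = 1)
    (hτ : ∀ k, 1 ≤ k → τ k =
      sInf ((fun i : ℕ => (i : ℕ∞)) ''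
        {i : ℕ | τ (k - 1) < (i : ℕ∞) ∧ i ≤ n ∧ ¬ I i ⊆ J (ς (k - 1))}))
    (hς : ∀ k, 1 ≤ k →
      (∀ i : ℕ, τ k = (i : ℕ∞) →
        ς k = sSup {j : ℕ | ς (k - 1) < j ∧ j ≤ m ∧ (I i ∩ J j).Nonempty}) ∧
      (τ k = ⊤ → ς k = 0))
    (n₀ : ℕ) (hn₀ : n₀ = sSup {k : ℕ | τ k ≠ ⊤})
    (nhat : ℕ)
    -- `n̂` counts the intervals of the reduced partition: `n` minus the number of
    -- merges of adjacent `I^i`'s contained in a common `J^j`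
    (hnhat : nhat = n - ((Finset.Icc 1 (n - 1)).filter
      (fun i => ∃ j ∈ Finset.Icc 1 m, I i ∪ I (i + 1) ⊆ J j)).card) :
    n₀ ≤ nhat ∧
    nhat ≤ n₀ + (∑ k ∈ Finset.Icc 1 n₀, if 1 < τ k - τ (k - 1) then 1 else 0) +
      (if τ n₀ < (n : ℕ∞) then 1 else 0) ∧
    n₀ + (∑ k ∈ Finset.Icc 1 n₀, if 1 < τ k - τ (k - 1) then 1 else 0) +
      (if τ n₀ < (n : ℕ∞) then 1 else 0) ≤ 2 * n₀ + 1 := by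
  classical
  -- monotonicity of t and s
  have htlt : ∀ b ≤ n, ∀ a < b, t a < t b := by
    intro b
    induction b with
    | zero => intro _ a ha; omega
    | succ c ih =>
      intro hc a ha
      have h1 : t c < t (c+1) := htmono c (by omega)
      rcases Nat.lt_succ_iff_lt_or_eq.mp ha with h | h
      · exact lt_trans (ih (by omega) a h) h1
      · subst h; exact h1
  have htle : ∀ a b, a ≤ b → b ≤ n → t a ≤ t b := by
    intro a b hab hbn
    rcases eq_or_lt_of_le hab with h | h
    · subst h; exact le_refl _
    · exact (htlt b hbn a h).le
  have hslt : ∀ b ≤ m, ∀ a < b, s a < s b := by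
    intro b
    induction b with
    | zero => intro _ a ha; omega
    | succ c ih =>
      intro hc a ha
      have h1 : s c < s (c+1) := hsmono c (by omega)
      rcases Nat.lt_succ_iff_lt_or_eq.mp ha with h | h
      · exact lt_trans (ih (by omega) a h) h1
      · subst h; exact h1
  have hsle : ∀ a b, a ≤ b → b ≤ m → s a ≤ s b := by
    intro a b hab hbn
    rcases eq_or_lt_of_le hab with h | h
    · subst h; exact le_refl _
    · exact (hslt b hbn a h).le
  have hInem : ∀ i, 1 ≤ i → i ≤ n → t i ∈ I i := by
    intro i h1 h2
    rw [hI]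
    exact ⟨htlt i h2 (i-1) (by omega), le_refl _⟩
  -- τ specification
  have hτspec : ∀ k, 1 ≤ k → τ k ≠ ⊤ →
      ∃ i : ℕ, τ k = (i : ℕ∞) ∧ τ (k-1) < (i : ℕ∞) ∧ i ≤ n ∧ ¬ I i ⊆ J (ς (k-1)) ∧
        ∀ i' : ℕ, τ (k-1) < (i' : ℕ∞) → i' < i → I i' ⊆ J (ς (k-1)) := by
    intro k hk htop
    have h := hτ k hk
    set A := {i : ℕ | τ (k-1) < (i:ℕ∞) ∧ i ≤ n ∧ ¬ I i ⊆ J (ς (k-1))} with hA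
    have hAne : A.Nonempty := by
      by_contra h'
      rw [Set.not_nonempty_iff_eq_empty] at h'
      rw [h', Set.image_empty, sInf_empty] at h
      exact htop h
    rw [aux_sInf_image A hAne] at h
    have hmem := Nat.sInf_mem hAne
    refine ⟨sInf A, h, hmem.1, hmem.2.1, hmem.2.2, ?_⟩
    intro i' h1 h2
    by_contra h3
    exact absurd (Nat.sInf_le (show i' ∈ A from ⟨h1, by have := hmem.2.1; omega, h3⟩)) (by omega)
  have hτtop : ∀ k, 1 ≤ k → τ k = ⊤ → ∀ i : ℕ, τ (k-1) < (i:ℕ∞) → i ≤ n → I i ⊆ J (ς (k-1)) := by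
    intro k hk htop i h1 h2
    by_contra h3
    have h := hτ k hk
    rw [htop] at h
    have hle : sInf ((fun i : ℕ => (i : ℕ∞)) ''
        {i : ℕ | τ (k - 1) < (i : ℕ∞) ∧ i ≤ n ∧ ¬ I i ⊆ J (ς (k - 1))}) ≤ (i : ℕ∞) :=
      sInf_le ⟨i, ⟨h1, h2, h3⟩, rfl⟩
    rw [← h] at hle
    exact absurd hle (by simp)
  have hτsucctop : ∀ k, τ k = ⊤ → τ (k+1) = ⊤ := by
    intro k hk
    by_contra h
    obtain ⟨i, _, h1, _⟩ := hτspec (k+1) (by omega) h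
    rw [Nat.add_sub_cancel, hk] at h1
    exact absurd h1 (by simp)
  -- τ bounds
  have hτn : ∀ k, τ k ≠ ⊤ → (k : ℕ∞) ≤ τ k ∧ τ k ≤ (n : ℕ∞) := by
    intro k
    induction k with
    | zero => intro _; rw [hτ0]; exact ⟨le_refl _, by exact_mod_cast Nat.zero_le n⟩
    | succ c ih =>
      intro h
      have hc : τ c ≠ ⊤ := fun h' => h (hτsucctop c h')
      obtain ⟨i, hi, h1, h2, _⟩ := hτspec (c+1) (by omega) h
      rw [Nat.add_sub_cancel] at h1
      obtain ⟨ih1, ih2⟩ := ih hc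
      constructor
      · rw [hi]
        have : (c : ℕ∞) < (i : ℕ∞) := lt_of_le_of_lt ih1 h1
        have : c < i := by exact_mod_cast this
        exact_mod_cast this
      · rw [hi]; exact_mod_cast h2
  have hbdd : BddAbove {k : ℕ | τ k ≠ ⊤} := by
    refine ⟨n, fun k hk => ?_⟩
    have := (hτn k hk).1.trans (hτn k hk).2
    exact_mod_cast this
  have h0mem : (0:ℕ) ∈ {k : ℕ | τ k ≠ ⊤} := by simp [hτ0]
  have hτn₀ : τ n₀ ≠ ⊤ := by
    rw [hn₀]; exact Nat.sSup_mem ⟨0, h0mem⟩ hbdd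
  have htopmono : ∀ j k, j ≤ k → τ j = ⊤ → τ k = ⊤ := by
    intro j k hjk
    induction k with
    | zero => intro h; have : j = 0 := by omega
              rwa [this] at h
    | succ c ih =>
      intro h
      rcases Nat.lt_succ_iff_lt_or_eq.mp (Nat.lt_succ_of_le hjk) with h' | h'
      · exact hτsucctop c (ih (by omega) h)
      · rwa [h'] at h
  have hτfin : ∀ k ≤ n₀, τ k ≠ ⊤ := by
    intro k hk h
    exact hτn₀ (htopmono k n₀ hk h)
  have hτgt : ∀ k, n₀ < k → τ k = ⊤ := by
    intro k hk
    by_contra h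
    have : k ≤ n₀ := hn₀ ▸ le_csSup hbdd h
    omega
  -- values
  set v : ℕ → ℕ := fun k => (τ k).toNat with hv
  have hvk : ∀ k ≤ n₀, τ k = ((v k : ℕ) : ℕ∞) := fun k hk => (ENat.coe_toNat (hτfin k hk)).symm
  have hv0 : v 0 = 0 := by simp [hv, hτ0]
  have hvn : ∀ k ≤ n₀, k ≤ v k ∧ v k ≤ n := by
    intro k hk
    obtain ⟨h1, h2⟩ := hτn k (hτfin k hk)
    rw [hvk k hk] at h1 h2
    exact ⟨by exact_mod_cast h1, by exact_mod_cast h2⟩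
  have hvsucc : ∀ k, k + 1 ≤ n₀ → v k < v (k+1) := by
    intro k hk
    obtain ⟨i, hi, h1, _⟩ := hτspec (k+1) (by omega) (hτfin _ hk)
    rw [Nat.add_sub_cancel, hvk k (by omega)] at h1
    rw [hvk (k+1) hk] at hi
    have hiv : v (k+1) = i := by exact_mod_cast hi
    rw [hiv]
    exact_mod_cast h1
  have hvmono : ∀ j k, j < k → k ≤ n₀ → v j < v k := by
    intro j k
    induction k with
    | zero => omega
    | succ c ih =>
      intro hjk hc
      rcases Nat.lt_succ_iff_lt_or_eq.mp hjk with h | h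
      · exact lt_trans (ih h (by omega)) (hvsucc c hc)
      · subst h; exact hvsucc j hc
  -- main invariant
  have hQ : ∀ k ≤ n₀, (1 ≤ ς k ∧ ς k ≤ m ∧ s (ς k - 1) ≤ t (v k) ∧ t (v k) ≤ s (ς k)) ∧
      (1 ≤ k → ς (k-1) < ς k ∧ s (ς (k-1)) < t (v k)) := by
    intro k
    induction k with
    | zero =>
      intro _
      rw [hς0, hv0]
      refine ⟨⟨le_refl 1, hm, ?_, ?_⟩, by omega⟩
      · simp [ht0, hs0]
      · rw [ht0, ← hs0]; exact (hsmono 0 (by omega)).le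
    | succ c ih =>
      intro hc
      obtain ⟨⟨hς1, hςm, hQ1, hQ2⟩, _⟩ := ih (by omega)
      obtain ⟨i, hτi, hlt, hin, hnsub, hmin⟩ := hτspec (c+1) (by omega) (hτfin _ hc)
      rw [Nat.add_sub_cancel] at hlt hnsub hmin
      have hvi : v (c+1) = i := by
        have h := hvk (c+1) hc
        rw [hτi] at h
        exact_mod_cast h.symm
      have hvc : τ c = ((v c : ℕ) : ℕ∞) := hvk c (by omega)
      have hci : v c < i := by
        rw [hvc] at hlt
        exact_mod_cast hlt
      have hleft : s (ς c - 1) ≤ t (i-1) ∧ t (i-1) ≤ s (ς c) := by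
        rcases eq_or_lt_of_le (show v c ≤ i - 1 by omega) with h | h
        · rw [← h]; exact ⟨hQ1, hQ2⟩
        · have hsub := hmin (i-1) (by rw [hvc]; exact_mod_cast h) (by omega)
          have hmem : t (i-1) ∈ I (i-1) := hInem (i-1) (by omega) (by omega)
          have h2 := hsub hmem
          rw [hJ] at h2
          exact ⟨h2.1.le, h2.2⟩
      have hti : s (ς c) < t i := by
        by_contra h
        push_neg at h
        apply hnsub
        rw [hI, hJ]
        intro x hx
        exact ⟨lt_of_le_of_lt hleft.1 hx.1, le_trans hx.2 h⟩
      have hpm : t i ≤ s m := by rw [hsT, ← htT]; exact htle i n hin (le_refl n)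
      have hex' : ∃ j, t i ≤ s j := ⟨m, hpm⟩
      set j0 := Nat.find hex' with hj0
      have hj0le : t i ≤ s j0 := Nat.find_spec hex'
      have hj0m : j0 ≤ m := Nat.find_le hpm
      have hj0ς : ς c < j0 := by
        by_contra h
        push_neg at h
        have := hsle j0 (ς c) h hςm
        linarith
      have hj0lb : s (j0 - 1) < t i := by
        by_contra h
        push_neg at h
        exact Nat.find_min hex' (show j0 - 1 < j0 by omega) h
      have hςspec := (hς (c+1) (by omega)).1 i hτi
      rw [Nat.add_sub_cancel] at hςspec
      set S := {j : ℕ | ς c < j ∧ j ≤ m ∧ (I i ∩ J j).Nonempty} with hS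
      have hj0S : j0 ∈ S := ⟨hj0ς, hj0m, ⟨t i, hInem i (by omega) hin, by rw [hJ]; exact ⟨hj0lb, hj0le⟩⟩⟩
      have hSbdd : BddAbove S := ⟨m, fun j hj => hj.2.1⟩
      have hSmem : sSup S ∈ S := Nat.sSup_mem ⟨j0, hj0S⟩ hSbdd
      have hj0sup : j0 ≤ sSup S := le_csSup hSbdd hj0S
      obtain ⟨x, hxI, hxJ⟩ := hSmem.2.2
      rw [hI] at hxI
      rw [hJ] at hxJ
      rw [Nat.add_sub_cancel, hvi, hςspec]
      have hc1 : ς c < sSup S := hSmem.1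
      refine ⟨⟨by omega, hSmem.2.1, ?_, ?_⟩, fun _ => ⟨hc1, hti⟩⟩
      · calc s (sSup S - 1) ≤ x := hxJ.1.le
          _ ≤ t i := hxI.2
      · exact le_trans hj0le (hsle j0 (sSup S) hj0sup hSmem.2.1)
  -- merge lemma
  have hmerge : ∀ i, 1 ≤ i → i + 1 ≤ n →
      (∀ k, 1 ≤ k → k ≤ n₀ → v k ≠ i + 1 ∧ v k ≠ i) →
      ∃ j ∈ Finset.Icc 1 m, I i ∪ I (i + 1) ⊆ J j := by
    intro i h1 h2 hno
    have hKne : ((Finset.Icc 0 n₀).filter (fun k => v k < i)).Nonempty := by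
      refine ⟨0, ?_⟩
      rw [Finset.mem_filter, Finset.mem_Icc, hv0]
      exact ⟨⟨le_refl 0, Nat.zero_le _⟩, by omega⟩
    set k₀ := ((Finset.Icc 0 n₀).filter (fun k => v k < i)).max' hKne with hk₀
    have hk₀mem := Finset.max'_mem _ hKne
    rw [Finset.mem_filter, Finset.mem_Icc] at hk₀mem
    have hk₀n₀ : k₀ ≤ n₀ := hk₀mem.1.2
    have hk₀v : v k₀ < i := hk₀mem.2
    have hk₀max : ∀ k ≤ n₀, v k < i → k ≤ k₀ := fun k hk hvk' =>
      Finset.le_max' _ k (by rw [Finset.mem_filter, Finset.mem_Icc]; exact ⟨⟨Nat.zero_le k, hk⟩, hvk'⟩)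
    have hτk₀ : τ k₀ = ((v k₀ : ℕ) : ℕ∞) := hvk k₀ hk₀n₀
    have hsub : I i ⊆ J (ς k₀) ∧ I (i+1) ⊆ J (ς k₀) := by
      rcases eq_or_lt_of_le hk₀n₀ with h | h
      · have htop : τ (n₀+1) = ⊤ := hτgt (n₀+1) (by omega)
        have ht' := hτtop (n₀+1) (by omega) htop
        rw [Nat.add_sub_cancel, ← h] at ht'
        constructor
        · exact ht' i (by rw [hτk₀]; exact_mod_cast hk₀v) (by omega)
        · exact ht' (i+1) (by rw [hτk₀]; exact_mod_cast (show v k₀ < i+1 by omega)) h2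
      · have hfin := hτfin (k₀+1) (by omega)
        obtain ⟨i₁, hτi₁, _, _, _, hmin⟩ := hτspec (k₀+1) (by omega) hfin
        rw [Nat.add_sub_cancel] at hmin
        have hvi₁ : v (k₀+1) = i₁ := by
          have hh := hvk (k₀+1) (by omega)
          rw [hτi₁] at hh
          exact_mod_cast hh.symm
        have hne := hno (k₀+1) (by omega) (by omega)
        have hge : i ≤ v (k₀+1) := by
          by_contra hcon
          push_neg at hcon
          have := hk₀max (k₀+1) (by omega) hcon
          omega
        have hii : i + 1 < i₁ := by omega
        constructor
        · exact hmin i (by rw [hτk₀]; exact_mod_cast hk₀v) (by omega)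
        · exact hmin (i+1) (by rw [hτk₀]; exact_mod_cast (show v k₀ < i+1 by omega)) (by omega)
    obtain ⟨⟨hg1, hg2, _, _⟩, _⟩ := hQ k₀ hk₀n₀
    exact ⟨ς k₀, by rw [Finset.mem_Icc]; exact ⟨hg1, hg2⟩, Set.union_subset hsub.1 hsub.2⟩
  -- cut lemma
  have hcut : ∀ k, 1 ≤ k → k ≤ n₀ → 2 ≤ v k →
      ¬ (∃ j ∈ Finset.Icc 1 m, I (v k - 1) ∪ I (v k - 1 + 1) ⊆ J j) := by
    intro k hk hkn₀ hk2 hcon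
    obtain ⟨j, hjm, hsub⟩ := hcon
    rw [Finset.mem_Icc] at hjm
    obtain ⟨i₁, hτi₁, hlt, hin, hnsub, hmin⟩ := hτspec k hk (hτfin k hkn₀)
    have hvi : v k = i₁ := by
      have hh := hvk k hkn₀
      rw [hτi₁] at hh
      exact_mod_cast hh.symm
    have hvkn : v k ≤ n := (hvn k hkn₀).2
    have hk1n : k - 1 ≤ n₀ := by omega
    have hτk1 : τ (k-1) = ((v (k-1) : ℕ) : ℕ∞) := hvk (k-1) hk1n
    rw [hτk1] at hlt hmin
    have hvlt : v (k-1) < v k := by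
      rw [hvi]
      exact_mod_cast hlt
    obtain ⟨⟨_, hς1m, _, hQ12⟩, _⟩ := hQ (k-1) hk1n
    have h2 : s (ς (k-1)) < t (v k) := ((hQ k hkn₀).2 hk).2
    have h1 : t (v k - 1) ≤ s (ς (k-1)) := by
      rcases eq_or_lt_of_le (show v (k-1) ≤ v k - 1 by omega) with h | h
      · rw [← h]; exact hQ12
      · have hsub2 := hmin (v k - 1) (by exact_mod_cast h) (by omega)
        have hmem : t (v k - 1) ∈ I (v k - 1) := hInem _ (by omega) (by omega)
        have hh := hsub2 hmem
        rw [hJ] at hh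
        exact hh.2
    have h3 : t (v k - 1) ∈ J j := hsub (Or.inl (hInem _ (by omega) (by omega)))
    have h4 : t (v k) ∈ J j := by
      have hh : t (v k) ∈ I (v k - 1 + 1) := by
        rw [show v k - 1 + 1 = v k by omega]
        exact hInem _ (by omega) (by omega)
      exact hsub (Or.inr hh)
    rw [hJ] at h3 h4
    have h5 : ς (k-1) < j := by
      by_contra hcon2
      push_neg at hcon2
      have := hsle j (ς (k-1)) hcon2 hς1m
      linarith [h4.2]
    have h6 : s (ς (k-1)) ≤ s (j - 1) := hsle _ _ (by omega) (by omega)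
    linarith [h3.1]
  -- counting
  set F := (Finset.Icc 1 (n - 1)).filter
      (fun i => ∃ j ∈ Finset.Icc 1 m, I i ∪ I (i + 1) ⊆ J j) with hF
  set C := (Finset.Icc 1 (n - 1)).filter
      (fun i => ¬ ∃ j ∈ Finset.Icc 1 m, I i ∪ I (i + 1) ⊆ J j) with hC
  have hFC : F.card + C.card = n - 1 := by
    rw [hF, hC, Finset.card_filter_add_card_filter_not, Nat.card_Icc]
    omega
  have hnhat1 : nhat = 1 + C.card := by omega
  have hCmem : ∀ i ∈ C, 1 ≤ i ∧ i ≤ n - 1 ∧ ∃ k, 1 ≤ k ∧ k ≤ n₀ ∧ (v k = i + 1 ∨ v k = i) := by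
    intro i hi
    rw [hC, Finset.mem_filter, Finset.mem_Icc] at hi
    obtain ⟨⟨hi1, hi2⟩, hnm⟩ := hi
    refine ⟨hi1, hi2, ?_⟩
    by_contra hcon
    push_neg at hcon
    exact hnm (hmerge i hi1 (by omega) hcon)
  have hvC : ∀ k, 2 ≤ k → k ≤ n₀ → v k - 1 ∈ C := by
    intro k hk2 hkn
    have hv2 : 2 ≤ v k := le_trans hk2 (hvn k hkn).1
    have hvkn : v k ≤ n := (hvn k hkn).2
    rw [hC, Finset.mem_filter, Finset.mem_Icc]
    exact ⟨⟨by omega, by omega⟩, hcut k (by omega) hkn hv2⟩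
  have hlow : n₀ - 1 ≤ C.card := by
    have hmap : ∀ k ∈ Finset.Icc 2 n₀, v k - 1 ∈ C := by
      intro k hk
      rw [Finset.mem_Icc] at hk
      exact hvC k hk.1 hk.2
    have hinj : ∀ a ∈ Finset.Icc 2 n₀, ∀ b ∈ Finset.Icc 2 n₀, v a - 1 = v b - 1 → a = b := by
      intro a ha b hb hab
      rw [Finset.mem_Icc] at ha hb
      by_contra hne
      rcases Nat.lt_or_ge a b with h | h
      · have h1 := hvmono a b h hb.2
        have h2a := (hvn a (by omega)).1
        omega
      · have h' : b < a := by omega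
        have h1 := hvmono b a h' ha.2
        have h2b := (hvn b (by omega)).1
        omega
    calc n₀ - 1 = (Finset.Icc 2 n₀).card := by rw [Nat.card_Icc]; omega
      _ ≤ C.card := Finset.card_le_card_of_injOn _ hmap hinj
  rcases Nat.eq_zero_or_pos n₀ with hn₀0 | hn₀pos
  · have hC0 : C = ∅ := by
      rw [Finset.eq_empty_iff_forall_notMem]
      intro i hi
      obtain ⟨_, _, k, hk1, hk2, _⟩ := hCmem i hi
      omega
    have hCc : C.card = 0 := by rw [hC0]; rfl
    have hsum0 : (∑ k ∈ Finset.Icc 1 n₀, if 1 < τ k - τ (k - 1) then 1 else 0) = 0 := by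
      rw [hn₀0]
      simp
    have hlt0 : τ n₀ < (n:ℕ∞) := by
      rw [hn₀0, hτ0]
      exact_mod_cast hn
    rw [hsum0, if_pos hlt0, hn₀0]
    omega
  · -- n₀ ≥ 1
    set D1 := (Finset.Icc 2 n₀).image (fun k => v k - 1) with hD1
    set D2 : Finset ℕ := if 1 < τ 1 - τ 0 then {v 1 - 1} else ∅ with hD2
    set D3 := ((Finset.Icc 2 n₀).filter (fun k => 1 < τ k - τ (k-1))).image (fun k => v (k-1)) with hD3
    set D4 : Finset ℕ := if τ n₀ < (n:ℕ∞) then {v n₀} else ∅ with hD4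
    have hCD : C ⊆ D1 ∪ D2 ∪ D3 ∪ D4 := by
      intro i hi
      obtain ⟨hi1, hi2, k, hk1, hk2, hk3⟩ := hCmem i hi
      simp only [Finset.mem_union]
      by_cases hcase : ∃ k', 1 ≤ k' ∧ k' ≤ n₀ ∧ v k' = i + 1
      · obtain ⟨k', h1', h2', h3'⟩ := hcase
        rcases Nat.lt_or_ge k' 2 with h | h
        · have hk'1 : k' = 1 := by omega
          subst hk'1
          left; left; right
          have hτ1 : 1 < τ 1 - τ 0 := by
            rw [hτ0]
            have hh : τ 1 = ((v 1 : ℕ) : ℕ∞) := hvk 1 (by omega)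
            rw [hh]
            simp only [tsub_zero]
            have hv1 : (1:ℕ) < v 1 := by omega
            exact_mod_cast hv1
          rw [hD2, if_pos hτ1, Finset.mem_singleton]
          omega
        · left; left; left
          rw [hD1, Finset.mem_image]
          exact ⟨k', by rw [Finset.mem_Icc]; omega, by omega⟩
      · have hvki : v k = i := by
          rcases hk3 with h | h
          · exact absurd ⟨k, hk1, hk2, h⟩ hcase
          · exact h
        rcases Nat.lt_or_ge k n₀ with h | h
        · have hfin : k + 1 ≤ n₀ := by omega
          have hlt' : v k < v (k+1) := hvsucc k hfin
          have hne' : v (k+1) ≠ i + 1 := fun hcon => hcase ⟨k+1, by omega, hfin, hcon⟩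
          have hgap : 1 < τ (k+1) - τ k := by
            rw [hvk (k+1) hfin, hvk k (by omega)]
            have hcast : ((v (k+1) - v k : ℕ) : ℕ∞) = ((v (k+1) : ℕ) : ℕ∞) - ((v k : ℕ) : ℕ∞) := by
              exact_mod_cast rfl
            rw [← hcast]
            have hgap' : 1 < v (k+1) - v k := by omega
            exact_mod_cast hgap'
          left; right
          rw [hD3, Finset.mem_image]
          refine ⟨k+1, ?_, ?_⟩
          · rw [Finset.mem_filter, Finset.mem_Icc]
            refine ⟨⟨by omega, hfin⟩, ?_⟩
            rw [Nat.add_sub_cancel]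
            exact hgap
          · rw [Nat.add_sub_cancel]
            exact hvki
        · have hkn : k = n₀ := by omega
          have hlt' : τ n₀ < (n:ℕ∞) := by
            rw [hvk n₀ (le_refl _)]
            have hvn' : v n₀ < n := by rw [← hkn, hvki]; omega
            exact_mod_cast hvn'
          right
          rw [hD4, if_pos hlt', Finset.mem_singleton]
          rw [← hkn, hvki]
    have hD1c : D1.card ≤ n₀ - 1 := by
      refine le_trans Finset.card_image_le ?_
      rw [Nat.card_Icc]
      omega
    have hD2c : D2.card = if 1 < τ 1 - τ 0 then 1 else 0 := by
      rw [hD2]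
      split_ifs <;> simp
    have hD3c : D3.card ≤ ∑ k ∈ Finset.Icc 2 n₀, if 1 < τ k - τ (k-1) then 1 else 0 := by
      refine le_trans Finset.card_image_le ?_
      rw [Finset.card_filter]
    have hD4c : D4.card = if τ n₀ < (n:ℕ∞) then 1 else 0 := by
      rw [hD4]
      split_ifs <;> simp
    have hsplit : (∑ k ∈ Finset.Icc 1 n₀, if 1 < τ k - τ (k - 1) then 1 else 0) =
        (if 1 < τ 1 - τ 0 then 1 else 0) +
          ∑ k ∈ Finset.Icc 2 n₀, if 1 < τ k - τ (k-1) then 1 else 0 := by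
      have hins : Finset.Icc 1 n₀ = insert 1 (Finset.Icc 2 n₀) := by
        ext x
        simp only [Finset.mem_Icc, Finset.mem_insert]
        omega
      rw [hins, Finset.sum_insert (by simp [Finset.mem_Icc])]
    have hu1 : (D1 ∪ D2 ∪ D3 ∪ D4).card ≤ D1.card + D2.card + D3.card + D4.card := by
      calc (D1 ∪ D2 ∪ D3 ∪ D4).card ≤ (D1 ∪ D2 ∪ D3).card + D4.card := Finset.card_union_le _ _
        _ ≤ (D1 ∪ D2).card + D3.card + D4.card := by
            have := Finset.card_union_le (D1 ∪ D2) D3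
            omega
        _ ≤ D1.card + D2.card + D3.card + D4.card := by
            have := Finset.card_union_le D1 D2
            omega
    have hCcard : C.card ≤ (n₀ - 1) + ((if 1 < τ 1 - τ 0 then 1 else 0) +
        ∑ k ∈ Finset.Icc 2 n₀, if 1 < τ k - τ (k-1) then 1 else 0) +
        (if τ n₀ < (n:ℕ∞) then 1 else 0) := by
      have h0 := Finset.card_le_card hCD
      omega
    have hsum_le : (∑ k ∈ Finset.Icc 1 n₀, if 1 < τ k - τ (k - 1) then 1 else 0) ≤ n₀ := by
      calc (∑ k ∈ Finset.Icc 1 n₀, if 1 < τ k - τ (k - 1) then 1 else 0)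
          ≤ ∑ k ∈ Finset.Icc 1 n₀, 1 := Finset.sum_le_sum (fun k _ => by split_ifs <;> omega)
        _ = n₀ := by rw [Finset.sum_const, smul_eq_mul, Nat.card_Icc]; omega
    have hind_le : (if τ n₀ < (n:ℕ∞) then 1 else 0) ≤ 1 := by split_ifs <;> omega
    refine ⟨by omega, ?_, by omega⟩
    rw [hsplit]
    omega
end

section
/- Overlap-length bound (Hayashi–Yoshida Lemma 5): for the reduced partition $(\hat I^i)_{i\le\hat n}$ of $(0,T]$ and $\hat J(i)=\{j: \hat I^i\cap J^j\ne\emptyset\}$, one has $\sum_{i=1}^{\hat n} \big|\cup_{j\in\hat J(i)} J^j\big| \le 3T$, where $|A|$ denotes Lebesgue measure, using that each $J^j$ contains at most one $\hat I^i$ (so each $J^j$ intersects at most 3 of the $\hat I^i$). -/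
open MeasureTheory Filter Real

open scoped Classical in
/-- Hayashi–Yoshida overlap-length bound.  For the reduced partition
`(Î^i)_{i ≤ n̂}` and the partition `(J^j)_{j ≤ m}` of `(0,T]` such that each `J^j`
contains at most one `Î^i`, one has `∑_i |⋃_{j ∈ Ĵ(i)} J^j| ≤ 3T`, where
`Ĵ(i) = {j : Î^i ∩ J^j ≠ ∅}` and `|·|` is Lebesgue measure. -/
theorem hayashi_yoshida_overlap_length_bound
    (T : ℝ) (hT : 0 < T) (nhat m : ℕ) (t s : ℕ → ℝ)
    (ht0 : t 0 = 0) (htT : t nhat = T) (hs0 : s 0 = 0) (hsT : s m = T)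
    (htmono : ∀ i < nhat, t i < t (i + 1)) (hsmono : ∀ j < m, s j < s (j + 1))
    (Ihat J : ℕ → Set ℝ)
    (hIhat : ∀ i, Ihat i = Set.Ioc (t (i - 1)) (t i))
    (hJ : ∀ j, J j = Set.Ioc (s (j - 1)) (s j))
    -- each J^j contains at most one Î^i
    (hone : ∀ j ∈ Finset.Icc 1 m, ∀ i₁ ∈ Finset.Icc 1 nhat, ∀ i₂ ∈ Finset.Icc 1 nhat,
      Ihat i₁ ⊆ J j → Ihat i₂ ⊆ J j → i₁ = i₂) :
    ∑ i ∈ Finset.Icc 1 nhat,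
      (volume (⋃ j ∈ Finset.filter (fun j => (Ihat i ∩ J j).Nonempty)
        (Finset.Icc 1 m), J j)).toReal ≤ 3 * T := by
  -- monotonicity of t
  have tmono : ∀ {k l : ℕ}, k ≤ l → l ≤ nhat → t k ≤ t l := by
    intro k l hkl hl
    induction l with
    | zero => have : k = 0 := Nat.le_zero.mp hkl; simp [this]
    | succ n ih =>
      rcases Nat.eq_or_lt_of_le hkl with h | h
      · rw [h]
      · exact le_trans (ih (Nat.lt_succ_iff.mp h) (Nat.le_of_succ_le hl))
          (le_of_lt (htmono n (by omega)))
  -- length of J j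
  have hlen : ∀ j ∈ Finset.Icc 1 m, (volume (J j)).toReal = s j - s (j - 1) := by
    intro j hj
    simp only [Finset.mem_Icc] at hj
    have hlt : s (j - 1) < s j := by
      have := hsmono (j - 1) (by omega)
      have hj1 : j - 1 + 1 = j := by omega
      rwa [hj1] at this
    rw [hJ, Real.volume_Ioc, ENNReal.toReal_ofReal (by linarith)]
  have hJfin : ∀ j, volume (J j) ≠ ⊤ := by
    intro j; rw [hJ, Real.volume_Ioc]; exact ENNReal.ofReal_ne_top
  -- step 1: per-i subadditivity bound
  have step1 : ∀ i ∈ Finset.Icc 1 nhat,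
      (volume (⋃ j ∈ Finset.filter (fun j => (Ihat i ∩ J j).Nonempty)
        (Finset.Icc 1 m), J j)).toReal
      ≤ ∑ j ∈ Finset.filter (fun j => (Ihat i ∩ J j).Nonempty)
          (Finset.Icc 1 m), (volume (J j)).toReal := by
    intro i _
    set F := Finset.filter (fun j => (Ihat i ∩ J j).Nonempty) (Finset.Icc 1 m)
    have h1 : volume (⋃ j ∈ F, J j) ≤ ∑ j ∈ F, volume (J j) :=
      measure_biUnion_finset_le _ _
    have hfin : ∑ j ∈ F, volume (J j) ≠ ⊤ :=
      (ENNReal.sum_lt_top.mpr (fun j _ => (hJfin j).lt_top)).ne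
    calc (volume (⋃ j ∈ F, J j)).toReal
        ≤ (∑ j ∈ F, volume (J j)).toReal := ENNReal.toReal_mono hfin h1
      _ = ∑ j ∈ F, (volume (J j)).toReal := ENNReal.toReal_sum (fun j _ => hJfin j)
  -- card bound: each J j meets at most 3 of the Ihat i
  have card3 : ∀ j ∈ Finset.Icc 1 m,
      ((Finset.Icc 1 nhat).filter (fun i => (Ihat i ∩ J j).Nonempty)).card ≤ 3 := by
    intro j hj
    set S := (Finset.Icc 1 nhat).filter (fun i => (Ihat i ∩ J j).Nonempty) with hS
    by_contra hcon
    push_neg at hcon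
    have hne : S.Nonempty := Finset.card_pos.mp (by omega)
    set a := S.min' hne with ha
    set b := S.max' hne with hb
    have haS : a ∈ S := S.min'_mem hne
    have hbS : b ∈ S := S.max'_mem hne
    have hsub : S ⊆ Finset.Icc a b := by
      intro x hx
      simp only [Finset.mem_Icc]
      exact ⟨S.min'_le x hx, S.le_max' x hx⟩
    have hcard : S.card ≤ b + 1 - a := by
      calc S.card ≤ (Finset.Icc a b).card := Finset.card_le_card hsub
        _ = b + 1 - a := Nat.card_Icc a b
    have hab : a + 3 ≤ b := by omega
    simp only [hS, Finset.mem_filter, Finset.mem_Icc] at haS hbS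
    obtain ⟨⟨ha1, han⟩, x, hxI, hxJ⟩ := haS
    obtain ⟨⟨hb1, hbn⟩, y, hyI, hyJ⟩ := hbS
    rw [hIhat] at hxI hyI
    rw [hJ] at hxJ hyJ
    have hsa : s (j - 1) < t a := lt_of_lt_of_le hxJ.1 hxI.2
    have hbs : t (b - 1) < s j := lt_of_lt_of_le hyI.1 hyJ.2
    have key : ∀ i, a < i → i < b → Ihat i ⊆ J j := by
      intro i hai hib
      rw [hIhat, hJ]
      apply Set.Ioc_subset_Ioc
      · exact le_of_lt (lt_of_lt_of_le hsa (tmono (by omega) (by omega)))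
      · exact le_of_lt (lt_of_le_of_lt (tmono (by omega) (by omega)) hbs)
    have h12 : a + 1 = a + 2 := by
      refine hone j hj (a + 1) ?_ (a + 2) ?_ (key _ (by omega) (by omega))
        (key _ (by omega) (by omega))
      · simp only [Finset.mem_Icc]; omega
      · simp only [Finset.mem_Icc]; omega
    omega
  -- main computation
  have main : ∑ i ∈ Finset.Icc 1 nhat,
      ∑ j ∈ Finset.filter (fun j => (Ihat i ∩ J j).Nonempty)
        (Finset.Icc 1 m), (volume (J j)).toReal ≤ 3 * T := by
    have swap : ∑ i ∈ Finset.Icc 1 nhat,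
        ∑ j ∈ Finset.filter (fun j => (Ihat i ∩ J j).Nonempty)
          (Finset.Icc 1 m), (volume (J j)).toReal
        = ∑ j ∈ Finset.Icc 1 m,
            ((Finset.Icc 1 nhat).filter (fun i => (Ihat i ∩ J j).Nonempty)).card
              * (volume (J j)).toReal := by
      simp only [Finset.sum_filter]
      rw [Finset.sum_comm]
      congr 1
      ext j
      rw [← Finset.sum_filter, Finset.sum_const, nsmul_eq_mul]
    rw [swap]
    have hbound : ∀ j ∈ Finset.Icc 1 m,
        (((Finset.Icc 1 nhat).filter (fun i => (Ihat i ∩ J j).Nonempty)).card : ℝ)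
          * (volume (J j)).toReal ≤ 3 * (s j - s (j - 1)) := by
      intro j hj
      rw [hlen j hj]
      have hnn : (0:ℝ) ≤ s j - s (j - 1) := by
        have := hlen j hj
        rw [← this]; exact ENNReal.toReal_nonneg
      apply mul_le_mul_of_nonneg_right _ hnn
      exact_mod_cast card3 j hj
    calc ∑ j ∈ Finset.Icc 1 m,
          (((Finset.Icc 1 nhat).filter (fun i => (Ihat i ∩ J j).Nonempty)).card : ℝ)
            * (volume (J j)).toReal
        ≤ ∑ j ∈ Finset.Icc 1 m, 3 * (s j - s (j - 1)) := Finset.sum_le_sum hbound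
      _ = 3 * ∑ j ∈ Finset.Icc 1 m, (s j - s (j - 1)) := by rw [Finset.mul_sum]
      _ = 3 * T := by
          have tele : ∀ n : ℕ, ∑ j ∈ Finset.Icc 1 n, (s j - s (j - 1)) = s n - s 0 := by
            intro n
            induction n with
            | zero => simp
            | succ k ih =>
              rw [Finset.sum_Icc_succ_top (by omega : 1 ≤ k + 1), ih]
              have hk : k + 1 - 1 = k := rfl
              rw [hk]; ring
          rw [tele m, hsT, hs0]; ring
  exact le_trans (Finset.sum_le_sum step1) main
end
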